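/- arXiv:1904.03275 — 9 statements merged into one kernel-verified Lean document; each statement's English description precedes it below -/
import Mathlib

section
/- Let L* be a d-subspace of ℝ^D with d ≥ 1, and let the dataset X consist of N_in inlier points lying in L* and in general position in L*, together with N_out arbitrary outlier points in ℝ^D. If N_in > N_out + d − 1 (equivalently, N_out < (N − d + 1)/2 where N = N_in + N_out), then for every d-subspace L of ℝ^D with L ≠ L*, the number of data points of X lying in L is strictly less than the number of data points of X lying in L*; in particular, L* is the unique maximizer of |X ∩ L| over all d-subspaces L. -/
open Module

/-- The points `a` (a family in `ℝ^D`, duplicates allowed) are in *general position* in a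
`d`-dimensional subspace: every selection of `d` of them at distinct indices is linearly
independent. -/
def InGenPos {D N : ℕ} (a : Fin N → EuclideanSpace ℝ (Fin D)) (d : ℕ) : Prop :=
  ∀ s : Finset (Fin N), s.card = d →
    LinearIndependent ℝ (fun i : {x : Fin N // x ∈ s} => a i.1)

/-- Number of points of the family `x` lying in the subspace `L`. -/
noncomputable def countIn {D N : ℕ} (x : Fin N → EuclideanSpace ℝ (Fin D))
    (L : Submodule ℝ (EuclideanSpace ℝ (Fin D))) : ℕ :=
  Nat.card {i : Fin N // x i ∈ L}

/-! Any `d` inliers span `L*`, so a `d`-subspace `L ≠ L*` meets `L*` in dimension `< d` and hence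
contains at most `d - 1` inliers. Adding at most `N_out` outliers, `L` holds at most
`N_out + d - 1 < N_in` points, while `L*` already holds all `N_in` inliers. -/

namespace Submodule

variable {K V : Type*} [DivisionRing K] [AddCommGroup V] [Module K V]

theorem eq_of_finrank_eq_of_le_finrank_inf {L M : Submodule K V} [FiniteDimensional K L]
    [FiniteDimensional K M] {d : ℕ} (hL : finrank K L = d) (hM : finrank K M = d)
    (h : d ≤ finrank K ↥(L ⊓ M)) : L = M :=
  (eq_of_le_of_finrank_le inf_le_left (hL ▸ h)).symm.trans
    (eq_of_le_of_finrank_le inf_le_right (hM ▸ h))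

theorem card_le_finrank_of_linearIndependent {ι : Type*} [Fintype ι] {v : ι → V}
    {M : Submodule K V} [FiniteDimensional K M] (hv : LinearIndependent K v)
    (hvM : ∀ i, v i ∈ M) : Fintype.card ι ≤ finrank K M :=
  finrank_span_eq_card hv ▸ finrank_mono (span_le.2 (Set.range_subset_iff.2 hvM))

end Submodule

section countIn

variable {D N : ℕ} (x : Fin N → EuclideanSpace ℝ (Fin D))
  (L : Submodule ℝ (EuclideanSpace ℝ (Fin D)))

open scoped Classical in
theorem countIn_eq_card_filter : countIn x L = (Finset.univ.filter fun i => x i ∈ L).card := by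
  rw [countIn, Nat.card_eq_fintype_card, Fintype.card_subtype]

theorem countIn_le : countIn x L ≤ N :=
  (Finite.card_subtype_le _).trans_eq (Nat.card_eq_fintype_card.trans (Fintype.card_fin N))

theorem countIn_eq_of_forall_mem (hx : ∀ i, x i ∈ L) : countIn x L = N :=
  (Nat.card_congr (Equiv.subtypeUnivEquiv hx)).trans (Nat.card_eq_fintype_card.trans
    (Fintype.card_fin N))

theorem countIn_lt_of_inGenPos {d : ℕ} {L' : Submodule ℝ (EuclideanSpace ℝ (Fin D))}
    (hgp : InGenPos x d) (hx : ∀ i, x i ∈ L') (hL : finrank ℝ L = d) (hL' : finrank ℝ L' = d)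
    (hne : L ≠ L') : countIn x L < d := by
  classical
  by_contra! h
  rw [countIn_eq_card_filter] at h
  obtain ⟨s, hsL, hs⟩ := Finset.exists_subset_card_eq h
  have hmem : ∀ i : {i // i ∈ s}, x i.1 ∈ L ⊓ L' := fun i =>
    ⟨(Finset.mem_filter.1 (hsL i.2)).2, hx i⟩
  have hdim : d ≤ finrank ℝ ↥(L ⊓ L') := by
    simpa [hs] using Submodule.card_le_finrank_of_linearIndependent (hgp s hs) hmem
  exact hne (Submodule.eq_of_finrank_eq_of_le_finrank_inf hL hL' hdim)

end countIn

theorem stmt_0_general (D d Nin Nout : ℕ)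
    (Lstar : Submodule ℝ (EuclideanSpace ℝ (Fin D)))
    (hLstar : finrank ℝ Lstar = d)
    (a : Fin Nin → EuclideanSpace ℝ (Fin D)) (haL : ∀ i, a i ∈ Lstar)
    (hgp : InGenPos a d)
    (o : Fin Nout → EuclideanSpace ℝ (Fin D))
    (hSNR : Nout + d - 1 < Nin) :
    (∀ L : Submodule ℝ (EuclideanSpace ℝ (Fin D)), finrank ℝ L = d → L ≠ Lstar →
      countIn a L + countIn o L < countIn a Lstar + countIn o Lstar) ∧
    (∀ L : Submodule ℝ (EuclideanSpace ℝ (Fin D)), finrank ℝ L = d →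
      countIn a Lstar + countIn o Lstar ≤ countIn a L + countIn o L → L = Lstar) := by
  have hlt : ∀ L : Submodule ℝ (EuclideanSpace ℝ (Fin D)), finrank ℝ L = d → L ≠ Lstar →
      countIn a L + countIn o L < countIn a Lstar + countIn o Lstar := fun L hL hne => by
    have hin := countIn_lt_of_inGenPos a L hgp haL hL hLstar hne
    have hout := countIn_le o L
    have hstar := countIn_eq_of_forall_mem a Lstar haL
    omega
  exact ⟨hlt, fun L hL hle => by_contra fun hne => (hlt L hL hne).not_ge hle⟩

/-- If the inliers lie in the `d`-subspace `L*`, are in general position in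
`L*`, and `N_in > N_out + d - 1`, then every `d`-subspace `L ≠ L*` contains strictly fewer data
points than `L*`; in particular `L*` is the unique maximizer of `|X ∩ L|` over `d`-subspaces. -/
theorem stmt_0 (D d Nin Nout : ℕ) (hd : 1 ≤ d)
    (Lstar : Submodule ℝ (EuclideanSpace ℝ (Fin D)))
    (hLstar : finrank ℝ Lstar = d)
    (a : Fin Nin → EuclideanSpace ℝ (Fin D)) (haL : ∀ i, a i ∈ Lstar)
    (hgp : InGenPos a d)
    (o : Fin Nout → EuclideanSpace ℝ (Fin D))
    (hSNR : Nout + d - 1 < Nin) :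
    (∀ L : Submodule ℝ (EuclideanSpace ℝ (Fin D)), finrank ℝ L = d → L ≠ Lstar →
      countIn a L + countIn o L < countIn a Lstar + countIn o Lstar) ∧
    (∀ L : Submodule ℝ (EuclideanSpace ℝ (Fin D)), finrank ℝ L = d →
      countIn a Lstar + countIn o Lstar ≤ countIn a L + countIn o L → L = Lstar) :=
  stmt_0_general D d Nin Nout Lstar hLstar a haL hgp o hSNR
end

section
/- Let L* be a d-subspace of ℝ^D with d ≥ 1, let a_1, …, a_{N_in} ∈ L* be in general position in L* with N_in ≥ d − 1, let y ∈ ℝ^D with y ∉ L*, and suppose all N_out ≥ 1 outliers equal y. Then there exists a d-subspace L of ℝ^D with L ≠ L* that contains y and at least d − 1 of the inliers, so that the number of data points in L is at least N_out + d − 1. Consequently, if N_in ≤ N_out + d − 1, then L* is not the unique maximizer over d-subspaces of the number of contained data points. -/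
open Module

/-- Any submodule of finrank at most `d` extends to one of finrank exactly `d`,
provided `d` is at most the dimension of the ambient space. -/
lemma exists_superset_finrank_eq {V : Type*} [AddCommGroup V] [Module ℝ V]
    [FiniteDimensional ℝ V] (d : ℕ) (hd : d ≤ finrank ℝ V)
    (M : Submodule ℝ V) (hM : finrank ℝ M ≤ d) :
    ∃ L : Submodule ℝ V, M ≤ L ∧ finrank ℝ L = d := by
  suffices H : ∀ k : ℕ, ∀ M : Submodule ℝ V, finrank ℝ M + k = d →
      ∃ L : Submodule ℝ V, M ≤ L ∧ finrank ℝ L = d by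
    exact H (d - finrank ℝ M) M (by omega)
  intro k
  induction k with
  | zero => exact fun M h => ⟨M, le_rfl, by omega⟩
  | succ n ih =>
    intro M h
    have hlt : finrank ℝ M < finrank ℝ V := by omega
    obtain ⟨m, hm⟩ := M.exists_of_finrank_lt hlt
    have hmM : m ∉ M := by simpa using hm 1 one_ne_zero
    have hm0 : m ≠ 0 := fun h0 => hmM (h0 ▸ M.zero_mem)
    have hinf : M ⊓ Submodule.span ℝ {m} = ⊥ := by
      rw [eq_bot_iff]
      rintro x ⟨hxM, hxs⟩
      obtain ⟨r, rfl⟩ := Submodule.mem_span_singleton.mp hxs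
      rcases eq_or_ne r 0 with rfl | hr
      · simp
      · have this := M.smul_mem r⁻¹ hxM
        exact absurd (by rw [smul_smul, inv_mul_cancel₀ hr, one_smul] at this; exact this) hmM
    have hsup : finrank ℝ ↥(M ⊔ Submodule.span ℝ {m}) = finrank ℝ M + 1 := by
      have := Submodule.finrank_sup_add_finrank_inf_eq M (Submodule.span ℝ {m})
      rw [hinf, finrank_bot, finrank_span_singleton hm0] at this
      omega
    obtain ⟨L, hle, hL⟩ := ih (M ⊔ Submodule.span ℝ {m}) (by omega)
    exact ⟨L, le_trans le_sup_left hle, hL⟩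

/-- With inliers in general position in `L*` (with `N_in ≥ d - 1`) and all
`N_out ≥ 1` outliers equal to a point `y ∉ L*`, there is a `d`-subspace `L ≠ L*` containing `y`
and at least `d - 1` inliers, hence containing at least `N_out + d - 1` data points.
Consequently, if `N_in ≤ N_out + d - 1`, then `L*` is not the unique maximizer over
`d`-subspaces of the number of contained data points. -/
theorem stmt_2 (D d Nin Nout : ℕ) (hd : 1 ≤ d) (hNin : d - 1 ≤ Nin) (hNout : 1 ≤ Nout)
    (Lstar : Submodule ℝ (EuclideanSpace ℝ (Fin D)))
    (hLstar : finrank ℝ Lstar = d)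
    (a : Fin Nin → EuclideanSpace ℝ (Fin D)) (haL : ∀ i, a i ∈ Lstar)
    (hgp : InGenPos a d)
    (y : EuclideanSpace ℝ (Fin D)) (hy : y ∉ Lstar) :
    (∃ L : Submodule ℝ (EuclideanSpace ℝ (Fin D)), finrank ℝ L = d ∧ L ≠ Lstar ∧ y ∈ L ∧
      d - 1 ≤ Nat.card {i : Fin Nin // a i ∈ L} ∧
      Nout + (d - 1) ≤ countIn a L + Nat.card {j : Fin Nout // y ∈ L}) ∧
    (Nin ≤ Nout + d - 1 →
      ∃ L : Submodule ℝ (EuclideanSpace ℝ (Fin D)), finrank ℝ L = d ∧ L ≠ Lstar ∧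
        countIn a Lstar + Nat.card {j : Fin Nout // y ∈ Lstar} ≤
          countIn a L + Nat.card {j : Fin Nout // y ∈ L}) := by
  classical
  have hdD : d ≤ finrank ℝ (EuclideanSpace ℝ (Fin D)) := hLstar ▸ Lstar.finrank_le
  -- choose d-1 inlier indices
  obtain ⟨t, -, htcard⟩ := Finset.exists_subset_card_eq
    (show d - 1 ≤ (Finset.univ : Finset (Fin Nin)).card by simpa using hNin)
  set S : Finset (EuclideanSpace ℝ (Fin D)) := insert y (t.image a) with hS
  have hMrank : finrank ℝ (Submodule.span ℝ (S : Set (EuclideanSpace ℝ (Fin D)))) ≤ d := by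
    refine (finrank_span_finset_le_card S).trans ?_
    calc S.card ≤ (t.image a).card + 1 := Finset.card_insert_le _ _
      _ ≤ t.card + 1 := by have := Finset.card_image_le (s := t) (f := a); omega
      _ ≤ d := by omega
  obtain ⟨L, hML, hLrank⟩ := exists_superset_finrank_eq d hdD _ hMrank
  have hyL : y ∈ L := hML (Submodule.subset_span (by simp [hS]))
  have haL' : ∀ i ∈ t, a i ∈ L := fun i hi =>
    hML (Submodule.subset_span (by simp [hS]; exact Or.inr ⟨i, hi, rfl⟩))
  have hne : L ≠ Lstar := fun h => hy (h ▸ hyL)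
  have hcount : d - 1 ≤ Nat.card {i : Fin Nin // a i ∈ L} := by
    have hinj : Function.Injective
        (fun x : {i : Fin Nin // i ∈ t} => (⟨x.1, haL' x.1 x.2⟩ : {i : Fin Nin // a i ∈ L})) := by
      intro x y h
      simp only [Subtype.mk.injEq] at h
      exact Subtype.ext h
    have := Nat.card_le_card_of_injective _ hinj
    rwa [Nat.card_eq_fintype_card (α := {i : Fin Nin // i ∈ t}), Fintype.card_coe, htcard] at this
  have hyout : Nat.card {j : Fin Nout // y ∈ L} = Nout := by
    rw [Nat.card_congr (Equiv.subtypeUnivEquiv (fun _ => hyL))]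
    simp
  have hpart1 : finrank ℝ L = d ∧ L ≠ Lstar ∧ y ∈ L ∧
      d - 1 ≤ Nat.card {i : Fin Nin // a i ∈ L} ∧
      Nout + (d - 1) ≤ countIn a L + Nat.card {j : Fin Nout // y ∈ L} := by
    refine ⟨hLrank, hne, hyL, hcount, ?_⟩
    rw [hyout, countIn]
    omega
  refine ⟨⟨L, hpart1⟩, fun hle => ⟨L, hpart1.1, hpart1.2.1, ?_⟩⟩
  have h0 : Nat.card {j : Fin Nout // y ∈ Lstar} = 0 := by
    have : IsEmpty {j : Fin Nout // y ∈ Lstar} := ⟨fun j => hy j.2⟩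
    simp
  have hcs : countIn a Lstar ≤ Nin := by
    have := Nat.card_le_card_of_injective (Subtype.val : {i : Fin Nin // a i ∈ Lstar} → Fin Nin)
      Subtype.val_injective
    simpa [countIn] using this
  have := hpart1.2.2.2.2
  omega
end

section
/- Let d ≥ 1, D ≥ d + 1, suppose d divides N_in, and consider the dataset in ℝ^D consisting of N_in/d copies of the standard basis vector e_j for each j = 1, …, d (the inliers) and N_out copies of e_{d+1} (the outliers), with L* = span(e_1, …, e_d). Then: (i) if N_out < N_in/d, every d-subspace L ≠ L* contains strictly fewer data points than L*, so L* is the unique maximizer of the number of contained data points; (ii) if N_out ≥ N_in/d, the d-subspace L = span(e_1, …, e_{d−1}, e_{d+1}) satisfies L ≠ L* and contains at least as many data points as L*, so L* is not the unique maximizer. -/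
/-!
The inliers put `m = N_in / d` points on each vector of the basis `e_1, …, e_d` of `L*`, and the
outliers put `N_out` points on `e_{d+1} ∉ L*`, so `L*` contains `d m` points. A `d`-subspace
`L ≠ L*` cannot contain the whole basis of `L*`, so it contains at most `(d - 1) m` inliers, plus at
most `N_out < m` outliers. Conversely `span(e_1, …, e_{d-1}, e_{d+1})` contains
`(d - 1) m + N_out ≥ d m` points.
-/

open Module Submodule Set Function

namespace EuclideanSpace

variable {𝕜 ι κ : Type*} [RCLike 𝕜] [DecidableEq ι]

theorem linearIndependent_single_one [Fintype ι] {f : κ → ι} (hf : Injective f) :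
    LinearIndependent 𝕜 fun j => single (f j) (1 : 𝕜) := by
  simpa [comp_def] using (basisFun ι 𝕜).toBasis.linearIndependent.comp f hf

theorem single_one_notMem_span_range_single_one {f : κ → ι} {k : ι} (hk : ∀ j, f j ≠ k) :
    single k (1 : 𝕜) ∉ span 𝕜 (range fun j => single (f j) (1 : 𝕜)) := by
  have hle : span 𝕜 (range fun j => single (f j) (1 : 𝕜)) ≤
      LinearMap.ker (proj (𝕜 := 𝕜) k).toLinearMap := by
    rw [span_le]
    rintro _ ⟨j, rfl⟩
    simp [hk j]
  intro h
  simpa using hle h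

theorem finrank_span_range_single_one_union_singleton [Fintype ι] [Fintype κ] {f : κ → ι}
    (hf : Injective f) {k : ι} (hk : ∀ j, f j ≠ k) :
    finrank 𝕜 (span 𝕜 (range (fun j => single (f j) (1 : 𝕜)) ∪ {single k 1})) =
      Fintype.card κ + 1 := by
  have hg : Injective (Sum.elim f fun _ : Unit => k) :=
    hf.sumElim (fun _ _ _ => rfl) fun j _ => hk j
  have hrange : (range fun j => single (f j) (1 : 𝕜)) ∪ {single k 1} =
      range fun j => single (Sum.elim f (fun _ : Unit => k) j) (1 : 𝕜) := by
    rw [← range_const (c := single k (1 : 𝕜)) (ι := Unit), ← Set.Sum.elim_range]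
    congr 1
    ext (j | u) <;> rfl
  rw [hrange, finrank_span_eq_card (linearIndependent_single_one hg)]
  simp

end EuclideanSpace

theorem Submodule.exists_notMem_of_ne_span {K V ι : Type*} [DivisionRing K] [AddCommGroup V]
    [Module K V] {v : ι → V} {L : Submodule K V} [FiniteDimensional K L]
    (hrank : finrank K L ≤ finrank K (span K (range v))) (hne : L ≠ span K (range v)) :
    ∃ j, v j ∉ L := by
  by_contra! h
  exact hne (eq_of_le_of_finrank_le (span_le.2 (range_subset_iff.2 h)) hrank).symm

section InliersAndOutliers

variable {E : Type*} {d m n : ℕ} {v : Fin d → E} {x : E} {a : Fin d × Fin m → E}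
  {o : Fin n → E}

theorem card_inliers_mem {S : Type*} [SetLike S E] (ha : ∀ p, a p = v p.1) (s : S) :
    Nat.card {p // a p ∈ s} = Nat.card {j // v j ∈ s} * m := by
  simp only [ha]
  rw [Nat.card_congr (Equiv.prodSubtypeFstEquivSubtypeProd (p := fun j => v j ∈ s)), Nat.card_prod,
    Nat.card_fin]

theorem card_outliers_mem {S : Type*} [SetLike S E] (ho : ∀ i, o i = x) {s : S} (hx : x ∈ s) :
    Nat.card {i // o i ∈ s} = n := by
  rw [Nat.card_congr (Equiv.subtypeUnivEquiv fun i => (ho i).symm ▸ hx), Nat.card_fin]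

theorem card_outliers_notMem {S : Type*} [SetLike S E] (ho : ∀ i, o i = x) {s : S}
    (hx : x ∉ s) : Nat.card {i // o i ∈ s} = 0 := by
  simp [ho, hx]

variable {K : Type*} [DivisionRing K] [AddCommGroup E] [Module K E]

theorem card_points_mem_span (ha : ∀ p, a p = v p.1) (ho : ∀ i, o i = x)
    (hx : x ∉ span K (range v)) :
    Nat.card {p // a p ∈ span K (range v)} + Nat.card {i // o i ∈ span K (range v)} =
      d * m := by
  rw [card_inliers_mem ha, card_outliers_notMem ho hx,
    Nat.card_congr (Equiv.subtypeUnivEquiv (p := fun j => v j ∈ span K (range v))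
      fun j => subset_span (mem_range_self j)), Nat.card_fin, add_zero]

theorem card_points_mem_lt_of_ne_span (ha : ∀ p, a p = v p.1) (ho : ∀ i, o i = x)
    (hv : LinearIndependent K v) (hx : x ∉ span K (range v)) (hnm : n < m)
    {L : Submodule K E} [FiniteDimensional K L] (hL : finrank K L ≤ d)
    (hne : L ≠ span K (range v)) :
    Nat.card {p // a p ∈ L} + Nat.card {i // o i ∈ L} <
      Nat.card {p // a p ∈ span K (range v)} + Nat.card {i // o i ∈ span K (range v)} := by
  obtain ⟨j, hj⟩ :=
    exists_notMem_of_ne_span (by rwa [finrank_span_eq_card hv, Fintype.card_fin]) hne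
  have hJ : Nat.card {j // v j ∈ L} < d := by
    simpa using Finite.card_subtype_lt (p := fun j => v j ∈ L) hj
  have hO : Nat.card {i // o i ∈ L} ≤ n := by
    simpa using Finite.card_subtype_le fun i => o i ∈ L
  rw [card_inliers_mem ha, card_points_mem_span ha ho hx]
  calc Nat.card {j // v j ∈ L} * m + Nat.card {i // o i ∈ L}
      < (Nat.card {j // v j ∈ L} + 1) * m := by rw [add_mul, one_mul]; omega
    _ ≤ d * m := Nat.mul_le_mul_right m hJ

theorem card_points_mem_span_le (ha : ∀ p, a p = v p.1) (ho : ∀ i, o i = x)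
    (hx : x ∉ span K (range v)) (hmn : m ≤ n) {L : Submodule K E} (hxL : x ∈ L) (j₀ : Fin d)
    (hvL : ∀ j, j ≠ j₀ → v j ∈ L) :
    Nat.card {p // a p ∈ span K (range v)} + Nat.card {i // o i ∈ span K (range v)} ≤
      Nat.card {p // a p ∈ L} + Nat.card {i // o i ∈ L} := by
  classical
  have hcover : ∀ j, v j ∈ L ∨ j = j₀ := fun j => (em (j = j₀)).symm.imp_left (hvL j)
  have hJ : d ≤ Nat.card {j // v j ∈ L} + 1 :=
    calc d = Nat.card {j // v j ∈ L ∨ j = j₀} := by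
          rw [Nat.card_congr (Equiv.subtypeUnivEquiv hcover), Nat.card_fin]
      _ ≤ Nat.card {j // v j ∈ L} + 1 := by
          simpa [Nat.card_eq_fintype_card] using
            Fintype.card_subtype_or (fun j => v j ∈ L) (· = j₀)
  rw [card_points_mem_span ha ho hx, card_inliers_mem ha, card_outliers_mem ho hxL]
  calc d * m ≤ (Nat.card {j // v j ∈ L} + 1) * m := Nat.mul_le_mul_right m hJ
    _ ≤ Nat.card {j // v j ∈ L} * m + n := by rw [add_mul, one_mul]; omega

end InliersAndOutliers

/-- Dataset: `N_in/d` copies of each of `e_1, …, e_d` (inliers, where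
`d ∣ N_in`) and `N_out` copies of `e_{d+1}` (outliers), with `L* = span(e_1, …, e_d)`.
(i) If `N_out < N_in/d`, every `d`-subspace `L ≠ L*` contains strictly fewer data points than
`L*`, so `L*` is the unique maximizer. (ii) If `N_out ≥ N_in/d`, the `d`-subspace
`span(e_1, …, e_{d−1}, e_{d+1})` differs from `L*` and contains at least as many data points,
so `L*` is not the unique maximizer. -/
theorem stmt_6 (D d Nin Nout : ℕ) (hd : 1 ≤ d) (hD : d + 1 ≤ D)
    (Lstar : Submodule ℝ (EuclideanSpace ℝ (Fin D)))
    (hLstar : Lstar = Submodule.span ℝ (Set.range fun j : Fin d =>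
      EuclideanSpace.single (Fin.castLE (by omega) j) (1 : ℝ)))
    -- the inliers: for each `j : Fin d`, `N_in / d` copies of `e_j`
    (a : Fin d × Fin (Nin / d) → EuclideanSpace ℝ (Fin D))
    (ha : ∀ p, a p = EuclideanSpace.single (Fin.castLE (by omega) p.1) (1 : ℝ))
    -- the outliers: `N_out` copies of `e_{d+1}`
    (o : Fin Nout → EuclideanSpace ℝ (Fin D))
    (ho : ∀ i, o i = EuclideanSpace.single (⟨d, by omega⟩ : Fin D) (1 : ℝ)) :
    (Nout < Nin / d →
      ∀ L : Submodule ℝ (EuclideanSpace ℝ (Fin D)), finrank ℝ L = d → L ≠ Lstar →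
        Nat.card {p // a p ∈ L} + Nat.card {i // o i ∈ L} <
          Nat.card {p // a p ∈ Lstar} + Nat.card {i // o i ∈ Lstar}) ∧
    (Nin / d ≤ Nout →
      ∀ L : Submodule ℝ (EuclideanSpace ℝ (Fin D)),
        L = Submodule.span ℝ
          ((Set.range fun j : Fin (d - 1) =>
              EuclideanSpace.single (Fin.castLE (by omega) j) (1 : ℝ)) ∪
            {EuclideanSpace.single (⟨d, by omega⟩ : Fin D) (1 : ℝ)}) →
        L ≠ Lstar ∧ finrank ℝ L = d ∧
          Nat.card {p // a p ∈ Lstar} + Nat.card {i // o i ∈ Lstar} ≤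
            Nat.card {p // a p ∈ L} + Nat.card {i // o i ∈ L}) := by
  have hdD : d ≤ D := by omega
  have hd₁ : d - 1 ≤ D := by omega
  have hcast : ∀ j : Fin d, Fin.castLE hdD j ≠ ⟨d, by omega⟩ := fun j h =>
    j.isLt.ne (by simpa using congrArg Fin.val h)
  have hout := EuclideanSpace.single_one_notMem_span_range_single_one (𝕜 := ℝ) hcast
  subst hLstar
  refine ⟨fun hlt L hL hne =>
    card_points_mem_lt_of_ne_span ha ho
      (EuclideanSpace.linearIndependent_single_one (Fin.castLE_injective hdD)) hout hlt hL.le hne,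
    fun hle L hL => ?_⟩
  have houtL : EuclideanSpace.single (⟨d, by omega⟩ : Fin D) (1 : ℝ) ∈ L :=
    hL ▸ subset_span (Or.inr rfl)
  refine ⟨fun h => hout (h ▸ houtL), ?_,
    card_points_mem_span_le ha ho hout hle houtL ⟨d - 1, by omega⟩ fun j hj => ?_⟩
  · rw [hL, EuclideanSpace.finrank_span_range_single_one_union_singleton
      (Fin.castLE_injective hd₁) fun j h =>
        (j.isLt.trans_le (Nat.sub_le d 1)).ne (by simpa using congrArg Fin.val h)]
    simp only [Fintype.card_fin]
    omega
  · have hj' : (j : ℕ) < d - 1 := lt_of_le_of_ne (Nat.le_sub_one_of_lt j.isLt) (Fin.val_ne_of_ne hj)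
    exact hL ▸ subset_span (Or.inl ⟨⟨j, hj'⟩, rfl⟩)
end

section
/- Let d ≥ 2, D ≥ d + 1, and N_in > d − 1. Consider the dataset in ℝ^D consisting of N_in − (d − 1) copies of e_1 and, for each j = 2, …, d, one copy of √(N_in − (d − 1)) · e_j (the N_in inliers, lying in L* = span(e_1, …, e_d)), together with 2 copies of e_{d+1} (the outliers). Then the d-subspace L = span(e_1, e_3, e_4, …, e_d, e_{d+1}) satisfies L ≠ L*, L contains exactly N_in + 1 data points while L* contains exactly N_in data points; hence L* is not a maximizer over d-subspaces of the number of contained data points. -/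
open Module

/-- Coordinate `k` vanishes on a span if it vanishes on all generators. -/
lemma coord_zero_of_mem_span {D : ℕ} {s : Set (EuclideanSpace ℝ (Fin D))} {k : Fin D}
    (h : ∀ v ∈ s, v k = 0) : ∀ x ∈ Submodule.span ℝ s, x k = 0 := by
  intro x hx
  induction hx using Submodule.span_induction with
  | mem v hv => exact h v hv
  | zero => simp
  | add u w _ _ hu hw => simp [hu, hw]
  | smul a u _ hu => simp [hu]

/-- The span of distinct standard basis vectors has rank the number of vectors. -/
lemma finrank_span_single {D d : ℕ} (g : Fin d → Fin D) (hg : Function.Injective g) :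
    finrank ℝ (Submodule.span ℝ
      (Set.range fun j => EuclideanSpace.single (g j) (1 : ℝ))) = d := by
  have hli : LinearIndependent ℝ (fun j => EuclideanSpace.single (g j) (1 : ℝ)) := by
    have h := ((EuclideanSpace.basisFun (Fin D) ℝ).orthonormal.comp g hg).linearIndependent
    have heq : (⇑(EuclideanSpace.basisFun (Fin D) ℝ) ∘ g) =
        fun j => EuclideanSpace.single (g j) (1 : ℝ) := by
      funext j; simp [Function.comp, EuclideanSpace.basisFun_apply]
    rwa [heq] at h
  simpa using finrank_span_eq_card hli

/-- Dataset: `N_in − (d−1)` copies of `e_1`, one copy of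
`√(N_in − (d−1)) · e_j` for each `j = 2, …, d` (the inliers, in `L* = span(e_1, …, e_d)`),
and `2` copies of `e_{d+1}` (the outliers). Then the `d`-subspace
`L = span(e_1, e_3, e_4, …, e_d, e_{d+1})` satisfies `L ≠ L*`, contains exactly `N_in + 1`
data points while `L*` contains exactly `N_in`; hence `L*` is not a maximizer. -/
theorem stmt_7 (D d Nin : ℕ) (hd : 2 ≤ d) (hD : d + 1 ≤ D) (hNin : d - 1 < Nin)
    (Lstar : Submodule ℝ (EuclideanSpace ℝ (Fin D)))
    (hLstar : Lstar = Submodule.span ℝ (Set.range fun j : Fin d =>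
      EuclideanSpace.single (Fin.castLE (by omega) j) (1 : ℝ)))
    -- the inliers: `N_in − (d−1)` copies of `e_1` and, for `j = 2, …, d`, one copy of
    -- `√(N_in − (d−1)) · e_j`
    (a : Fin (Nin - (d - 1)) ⊕ Fin (d - 1) → EuclideanSpace ℝ (Fin D))
    (ha1 : ∀ i, a (Sum.inl i) = EuclideanSpace.single (⟨0, by omega⟩ : Fin D) (1 : ℝ))
    (ha2 : ∀ j, a (Sum.inr j) = Real.sqrt ((Nin - (d - 1) : ℕ) : ℝ) •
      EuclideanSpace.single (⟨(j : ℕ) + 1, by have := j.isLt; omega⟩ : Fin D) (1 : ℝ))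
    -- the outliers: `2` copies of `e_{d+1}`
    (y : EuclideanSpace ℝ (Fin D))
    (hy : y = EuclideanSpace.single (⟨d, by omega⟩ : Fin D) (1 : ℝ))
    -- the subspace `L = span(e_1, e_3, e_4, …, e_d, e_{d+1})`
    (L : Submodule ℝ (EuclideanSpace ℝ (Fin D)))
    (hL : L = Submodule.span ℝ (Set.range fun j : Fin d =>
      if (j : ℕ) = 0 then EuclideanSpace.single (⟨0, by omega⟩ : Fin D) (1 : ℝ)
      else EuclideanSpace.single (⟨(j : ℕ) + 1, by have := j.isLt; omega⟩ : Fin D) (1 : ℝ))) :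
    L ≠ Lstar ∧ finrank ℝ L = d ∧
    Nat.card {i // a i ∈ L} + Nat.card {i : Fin 2 // y ∈ L} = Nin + 1 ∧
    Nat.card {i // a i ∈ Lstar} + Nat.card {i : Fin 2 // y ∈ Lstar} = Nin ∧
    Nat.card {i // a i ∈ Lstar} + Nat.card {i : Fin 2 // y ∈ Lstar} <
      Nat.card {i // a i ∈ L} + Nat.card {i : Fin 2 // y ∈ L} := by
  classical
  set c : ℝ := Real.sqrt ((Nin - (d - 1) : ℕ) : ℝ) with hc
  have hcpos : 0 < c := by
    apply Real.sqrt_pos.2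
    exact_mod_cast Nat.pos_of_ne_zero (by omega)
  -- index maps
  set gL : Fin d → Fin D := fun j =>
    if (j : ℕ) = 0 then ⟨0, by omega⟩
    else ⟨(j : ℕ) + 1, by have := j.isLt; omega⟩ with hgL
  set gS : Fin d → Fin D := Fin.castLE (by omega) with hgS
  have hgLinj : Function.Injective gL := by
    intro i j hij
    simp only [hgL] at hij
    by_cases hi : (i : ℕ) = 0 <;> by_cases hj : (j : ℕ) = 0 <;>
      simp [hi, hj, Fin.ext_iff] at hij ⊢ <;> omega
  have hgSinj : Function.Injective gS := Fin.castLE_injective _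
  have hLrw : L = Submodule.span ℝ
      (Set.range fun j => EuclideanSpace.single (gL j) (1 : ℝ)) := by
    have hfun : (fun j : Fin d =>
        if (j : ℕ) = 0 then EuclideanSpace.single (⟨0, by omega⟩ : Fin D) (1 : ℝ)
        else EuclideanSpace.single (⟨(j : ℕ) + 1, by have := j.isLt; omega⟩ : Fin D) (1 : ℝ))
        = fun j => EuclideanSpace.single (gL j) (1 : ℝ) := by
      funext j
      by_cases hj : (j : ℕ) = 0 <;> simp [hgL, hj]
    rw [hL, hfun]
  have hSrw : Lstar = Submodule.span ℝ
      (Set.range fun j => EuclideanSpace.single (gS j) (1 : ℝ)) := hLstar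
  -- membership helpers
  have memL : ∀ j : Fin d, EuclideanSpace.single (gL j) (1 : ℝ) ∈ L := by
    intro j; rw [hLrw]; exact Submodule.subset_span ⟨j, rfl⟩
  have memS : ∀ j : Fin d, EuclideanSpace.single (gS j) (1 : ℝ) ∈ Lstar := by
    intro j; rw [hSrw]; exact Submodule.subset_span ⟨j, rfl⟩
  have coordL : ∀ k : Fin D, (∀ j : Fin d, gL j ≠ k) → ∀ x ∈ L, x k = 0 := by
    intro k hk x hx
    rw [hLrw] at hx
    refine coord_zero_of_mem_span ?_ x hx
    rintro v ⟨j, rfl⟩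
    simp [EuclideanSpace.single_apply, (hk j).symm]
  have coordS : ∀ k : Fin D, (∀ j : Fin d, gS j ≠ k) → ∀ x ∈ Lstar, x k = 0 := by
    intro k hk x hx
    rw [hSrw] at hx
    refine coord_zero_of_mem_span ?_ x hx
    rintro v ⟨j, rfl⟩
    simp [EuclideanSpace.single_apply, (hk j).symm]
  -- key membership facts
  have hA_L : ∀ i, a (Sum.inl i) ∈ L := by
    intro i
    rw [ha1]
    have := memL ⟨0, by omega⟩
    simpa [hgL] using this
  have hA_S : ∀ i, a (Sum.inl i) ∈ Lstar := by
    intro i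
    rw [ha1]
    have := memS ⟨0, by omega⟩
    simpa [hgS, Fin.castLE] using this
  have hB_S : ∀ j : Fin (d - 1), a (Sum.inr j) ∈ Lstar := by
    intro j
    rw [ha2]
    refine Submodule.smul_mem _ _ ?_
    have := memS ⟨(j : ℕ) + 1, by have := j.isLt; omega⟩
    simpa [hgS, Fin.castLE] using this
  have hB_L : ∀ j : Fin (d - 1), (a (Sum.inr j) ∈ L ↔ (j : ℕ) ≠ 0) := by
    intro j
    constructor
    · intro hmem hj0
      have hk : ∀ j' : Fin d, gL j' ≠ (⟨(j : ℕ) + 1, by have := j.isLt; omega⟩ : Fin D) := by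
        intro j'
        by_cases h' : (j' : ℕ) = 0 <;> simp [hgL, h', Fin.ext_iff] <;> omega
      have := coordL _ hk _ hmem
      rw [ha2] at this
      simp [EuclideanSpace.single_apply] at this
      exact absurd this (ne_of_gt hcpos)
    · intro hj0
      rw [ha2]
      refine Submodule.smul_mem _ _ ?_
      have := memL ⟨(j : ℕ), by have := j.isLt; omega⟩
      simpa [hgL, hj0] using this
  have hy_L : y ∈ L := by
    rw [hy]
    have := memL ⟨d - 1, by omega⟩
    have h1 : (d - 1 : ℕ) ≠ 0 := by omega
    have h2 : (d - 1 : ℕ) + 1 = d := by omega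
    simpa [hgL, h1, h2] using this
  have hy_S : y ∉ Lstar := by
    intro hmem
    have hk : ∀ j' : Fin d, gS j' ≠ (⟨d, by omega⟩ : Fin D) := by
      intro j'
      simp [hgS, Fin.castLE, Fin.ext_iff]
      have := j'.isLt; omega
    have := coordS _ hk _ hmem
    rw [hy] at this
    simp [EuclideanSpace.single_apply] at this
  -- L ≠ Lstar
  have hne : L ≠ Lstar := by
    intro h
    have hmem : EuclideanSpace.single (⟨1, by omega⟩ : Fin D) (1 : ℝ) ∈ Lstar := by
      have := memS ⟨1, by omega⟩
      simpa [hgS, Fin.castLE] using this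
    rw [← h] at hmem
    have hk : ∀ j' : Fin d, gL j' ≠ (⟨1, by omega⟩ : Fin D) := by
      intro j'
      by_cases h' : (j' : ℕ) = 0 <;> simp [hgL, h', Fin.ext_iff] <;> omega
    have := coordL _ hk _ hmem
    simp [EuclideanSpace.single_apply] at this
  -- rank
  have hrank : finrank ℝ L = d := by rw [hLrw]; exact finrank_span_single gL hgLinj
  -- counting
  have cardyL : Nat.card {i : Fin 2 // y ∈ L} = 2 := by
    rw [Nat.card_congr (Equiv.subtypeUnivEquiv fun _ => hy_L)]
    simp
  have cardyS : Nat.card {i : Fin 2 // y ∈ Lstar} = 0 := by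
    have : IsEmpty {i : Fin 2 // y ∈ Lstar} := ⟨fun x => hy_S x.2⟩
    exact Nat.card_of_isEmpty
  have cardaS : Nat.card {i // a i ∈ Lstar} = Nin := by
    have hall : ∀ i, a i ∈ Lstar := by
      rintro (i | j)
      · exact hA_S i
      · exact hB_S j
    rw [Nat.card_congr (Equiv.subtypeUnivEquiv hall)]
    simp [Nat.card_eq_fintype_card]
    omega
  have cardaL : Nat.card {i // a i ∈ L} = Nin - 1 := by
    rw [Nat.card_congr (Equiv.subtypeSum)]
    rw [Nat.card_sum]
    have h1 : Nat.card {i : Fin (Nin - (d - 1)) // a (Sum.inl i) ∈ L} = Nin - (d - 1) := by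
      rw [Nat.card_congr (Equiv.subtypeUnivEquiv hA_L)]
      simp
    have h2 : Nat.card {j : Fin (d - 1) // a (Sum.inr j) ∈ L} = d - 2 := by
      rw [Nat.card_congr (Equiv.subtypeEquivRight hB_L)]
      rw [Nat.card_eq_fintype_card]
      have h3 : Fintype.card {j : Fin (d - 1) // (j : ℕ) = 0} = 1 := by
        rw [Fintype.card_subtype, Finset.card_eq_one]
        refine ⟨⟨0, by omega⟩, ?_⟩
        ext j
        simp [Fin.ext_iff]
      have := Fintype.card_subtype_compl (fun j : Fin (d - 1) => (j : ℕ) = 0)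
      rw [this, h3]
      simp
      omega
    rw [h1, h2]
    omega
  refine ⟨hne, hrank, ?_, ?_, ?_⟩ <;> simp only [cardaL, cardaS, cardyL, cardyS] <;> omega
end

section
/- Let L* be a d-subspace of ℝ^D with d ≥ 1, and let the dataset X of N = N_in + N_out points consist of N_in inliers lying in L* and in general position in L*, together with N_out arbitrary outliers in ℝ^D. If 2(N_out + d − 1) < N, then L* is the unique d-subspace L of ℝ^D with the property that the number of data points of X lying in L is at least N/2. -/
open Module

/-- (Deterministic core of RANSAC correctness.) With `N = N_in + N_out`
points, inliers in general position in the `d`-subspace `L*`, arbitrary outliers, and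
`2(N_out + d − 1) < N`, the subspace `L*` is the unique `d`-subspace containing at least
`N/2` of the data points. -/
theorem stmt_8 (D d Nin Nout N : ℕ) (hd : 1 ≤ d) (hN : N = Nin + Nout)
    (Lstar : Submodule ℝ (EuclideanSpace ℝ (Fin D)))
    (hLstar : finrank ℝ Lstar = d)
    (a : Fin Nin → EuclideanSpace ℝ (Fin D)) (haL : ∀ i, a i ∈ Lstar)
    (hgp : InGenPos a d)
    (o : Fin Nout → EuclideanSpace ℝ (Fin D))
    (hcond : 2 * (Nout + d - 1) < N) :
    ((N : ℝ) / 2 ≤ (countIn a Lstar + countIn o Lstar : ℕ)) ∧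
    (∀ L : Submodule ℝ (EuclideanSpace ℝ (Fin D)), finrank ℝ L = d →
      (N : ℝ) / 2 ≤ (countIn a L + countIn o L : ℕ) → L = Lstar) := by
  unfold countIn
  have hgp' := hgp
  unfold InGenPos at hgp'
  clear hgp
  rename' hgp' => hgp
  revert hcond
  intro hcond
  classical
  have hcA : Nat.card {i : Fin Nin // a i ∈ Lstar} = Nin := by
    have : ∀ i : Fin Nin, a i ∈ Lstar := haL
    rw [Nat.card_eq_fintype_card]
    rw [Fintype.card_subtype]
    simp [this]
  constructor
  · rw [div_le_iff₀ (by norm_num)]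
    have h1 : (N : ℕ) ≤ 2 * (Nat.card {i : Fin Nin // a i ∈ Lstar} + Nat.card {i : Fin Nout // o i ∈ Lstar}) := by
      rw [hcA]; omega
    calc (N:ℝ) ≤ ((2 * (Nat.card {i : Fin Nin // a i ∈ Lstar} + Nat.card {i : Fin Nout // o i ∈ Lstar}) : ℕ) : ℝ) := by exact_mod_cast h1
      _ = ((Nat.card {i : Fin Nin // a i ∈ Lstar} + Nat.card {i : Fin Nout // o i ∈ Lstar} : ℕ) : ℝ) * 2 := by push_cast; ring
  · intro L hL hcount
    by_contra hne
    -- Lstar not ≤ L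
    have hnotle : ¬ Lstar ≤ L := by
      intro hle
      exact hne (Submodule.eq_of_le_of_finrank_eq hle (by rw [hLstar, hL])).symm
    have hlt : L ⊓ Lstar < Lstar := by
      constructor
      · exact inf_le_right
      · intro h
        exact hnotle (le_trans h inf_le_left)
    have hrk : finrank ℝ (L ⊓ Lstar : Submodule ℝ (EuclideanSpace ℝ (Fin D))) < d := by
      rw [← hLstar]
      exact Submodule.finrank_lt_finrank_of_lt hlt
    -- inliers in L: fewer than d
    have hinlier : Nat.card {i : Fin Nin // a i ∈ L} < d := by
      by_contra hge
      push_neg at hge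
      rw [Nat.card_eq_fintype_card] at hge
      rw [Fintype.card_subtype] at hge
      obtain ⟨s, hs, hcard⟩ := Finset.exists_subset_card_eq hge
      have hmem : ∀ i ∈ s, a i ∈ (L ⊓ Lstar : Submodule ℝ (EuclideanSpace ℝ (Fin D))) := by
        intro i hi
        have := hs hi
        simp only [Finset.mem_filter] at this
        exact ⟨this.2, haL i⟩
      have hli := hgp s hcard
      -- restrict to submodule
      set K : Submodule ℝ (EuclideanSpace ℝ (Fin D)) := L ⊓ Lstar
      have hli' : LinearIndependent ℝ (fun i : {x : Fin Nin // x ∈ s} => (⟨a i.1, hmem i.1 i.2⟩ : K)) := by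
        apply LinearIndependent.of_comp K.subtype
        exact hli
      have := hli'.fintype_card_le_finrank
      rw [Fintype.card_coe, hcard] at this
      omega
    have houtlier : Nat.card {i : Fin Nout // o i ∈ L} ≤ Nout := by
      have := Nat.card_le_card_of_injective (f := fun i : {i : Fin Nout // o i ∈ L} => i.1)
        Subtype.val_injective
      simpa using this
    have hle2 : Nat.card {i : Fin Nin // a i ∈ L} + Nat.card {i : Fin Nout // o i ∈ L} ≤ Nout + d - 1 := by omega
    rw [div_le_iff₀ (by norm_num)] at hcount
    have : (N:ℝ) ≤ 2 * (Nout + d - 1 : ℕ) := by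
      calc (N:ℝ) ≤ (Nat.card {i : Fin Nin // a i ∈ L} + Nat.card {i : Fin Nout // o i ∈ L} : ℕ) * 2 := hcount
        _ ≤ (Nout + d - 1 : ℕ) * 2 := by exact_mod_cast Nat.mul_le_mul_right 2 hle2
        _ = 2 * (Nout + d - 1 : ℕ) := by ring
    have : (N:ℕ) ≤ 2 * (Nout + d - 1) := by exact_mod_cast this
    omega
end

section
/- Let L* be a d-subspace of ℝ^D with d ≥ 1, let X̃_in be a D × N_in real matrix whose columns are unit vectors lying in L* and spanning L*, and let X̃_out be a D × N_out real matrix (N_out ≥ 1) whose columns are unit vectors. Let λ_1 ≥ λ_2 ≥ … ≥ λ_D denote the eigenvalues of the symmetric matrix X̃_in X̃_inᵀ and set κ = λ_1/λ_d (note λ_d > 0 since the columns of X̃_in span L*). Fix γ ∈ (0, π/2). If N_in/N_out > d κ / cos(γ), then cos(γ) · λ_d − √(N_out) · ‖X̃_out‖₂ > 0, where ‖·‖₂ denotes the spectral (operator ℓ² → ℓ²) norm. In particular, λ_d ≥ N_in/(d κ) and ‖X̃_out‖₂ ≤ √(N_out). -/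
open Module

/-- The spectral (operator `ℓ² → ℓ²`) norm of a matrix. -/
noncomputable def specNorm {m n : ℕ} (A : Matrix (Fin m) (Fin n) ℝ) : ℝ :=
  ‖LinearMap.toContinuousLinearMap (Matrix.toEuclideanLin A)‖

/-!
The eigenvalues of `X̃_in X̃_inᵀ` are nonnegative, exactly `d` of them are nonzero because
`rank (X̃_in X̃_inᵀ) = rank X̃_in = dim L*`, and they sum to `tr (X̃_in X̃_inᵀ) = N_in`, the
columns being unit vectors. Hence `λ_d > 0` and `N_in ≤ d λ_1`, which turns the hypothesis on
`N_in / N_out` into `N_out < cos γ · λ_d`. On the other side, the spectral norm is at most the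
Frobenius norm, which is `√N_out` for a matrix with unit columns.
-/

open Finset

theorem LinearMap.toMatrix_eq_diagonal_of_apply_eq_smul {R M ι : Type*} [CommSemiring R]
    [AddCommMonoid M] [Module R M] [Fintype ι] [DecidableEq ι] (b : Basis ι R M)
    {f : M →ₗ[R] M} {μ : ι → R} (h : ∀ i, f (b i) = μ i • b i) :
    LinearMap.toMatrix b b f = Matrix.diagonal μ := by
  ext i j
  rcases eq_or_ne i j with rfl | hij
  · simp [LinearMap.toMatrix_apply, h]
  · simp [LinearMap.toMatrix_apply, h, hij]

theorem LinearMap.IsPositive.nonneg_of_apply_eq_smul {E : Type*} [NormedAddCommGroup E]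
    [InnerProductSpace ℝ E] {T : E →ₗ[ℝ] E} (hT : T.IsPositive) {v : E} (hv : v ≠ 0) {μ : ℝ}
    (h : T v = μ • v) : 0 ≤ μ :=
  eigenvalue_nonneg_of_nonneg
    (Module.End.hasEigenvalue_of_hasEigenvector ⟨Module.End.mem_eigenspace_iff.mpr h, hv⟩)
    hT.re_inner_nonneg_right

namespace Matrix

section Eigenbasis

variable {K M n : Type*} [Field K] [AddCommGroup M] [Module K M] [Fintype n] [DecidableEq n]
  (e b : Basis n K M) {A : Matrix n n K} {μ : n → K}

theorem rank_eq_card_ne_zero_of_eigenbasis [DecidableEq K]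
    (h : ∀ i, toLin e e A (b i) = μ i • b i) : A.rank = #{i | μ i ≠ 0} := by
  rw [A.rank_eq_finrank_range_toLin e e, ← toLin_toMatrix b b (toLin e e A),
    LinearMap.toMatrix_eq_diagonal_of_apply_eq_smul b h, ← rank_eq_finrank_range_toLin,
    rank_diagonal, Fintype.card_subtype]

theorem trace_eq_sum_of_eigenbasis (h : ∀ i, toLin e e A (b i) = μ i • b i) :
    A.trace = ∑ i, μ i := by
  rw [← trace_toLin_eq A e, LinearMap.trace_eq_matrix_trace K b,
    LinearMap.toMatrix_eq_diagonal_of_apply_eq_smul b h, trace_diagonal]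

end Eigenbasis

theorem rank_eq_finrank_span_euclidean_cols {𝕜 m n : Type*} [RCLike 𝕜] [Fintype n]
    (A : Matrix m n 𝕜) :
    A.rank = finrank 𝕜 (Submodule.span 𝕜
      (Set.range fun j => (EuclideanSpace.equiv m 𝕜).symm fun i => A i j)) := by
  rw [A.rank_eq_finrank_span_cols,
    ← LinearEquiv.finrank_map_eq (EuclideanSpace.equiv m 𝕜).symm.toLinearEquiv,
    Submodule.map_span, ← Set.range_comp]
  rfl

variable {m n : Type*} [Fintype m] [Fintype n]

theorem trace_mul_transpose_eq_sum_sq (A : Matrix m n ℝ) :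
    (A * Aᵀ).trace = ∑ i, ∑ j, A i j ^ 2 := by
  simp only [trace, diag, mul_apply, transpose_apply, sq]

theorem sum_sum_sq_eq_card_of_unit_cols (A : Matrix m n ℝ) (hA : ∀ j, ∑ i, A i j ^ 2 = 1) :
    ∑ i, ∑ j, A i j ^ 2 = Fintype.card n := by
  rw [Finset.sum_comm]
  simp [hA]

theorem norm_toEuclideanLin_sq_le [DecidableEq n] (A : Matrix m n ℝ) (v : EuclideanSpace ℝ n) :
    ‖toEuclideanLin A v‖ ^ 2 ≤ (∑ i, ∑ j, A i j ^ 2) * ‖v‖ ^ 2 := by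
  simp only [EuclideanSpace.norm_sq_eq, Real.norm_eq_abs, sq_abs]
  rw [Finset.sum_mul]
  refine Finset.sum_le_sum fun i _ => ?_
  simpa [mulVec, dotProduct] using Finset.sum_mul_sq_le_sq_mul_sq Finset.univ (A i) v

end Matrix

theorem specNorm_le_sqrt_sum_sq {m n : ℕ} (A : Matrix (Fin m) (Fin n) ℝ) :
    specNorm A ≤ √(∑ i, ∑ j, A i j ^ 2) := by
  refine ContinuousLinearMap.opNorm_le_bound _ (Real.sqrt_nonneg _) fun v => ?_
  refine le_of_pow_le_pow_left₀ two_ne_zero (by positivity) ?_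
  rw [mul_pow, Real.sq_sqrt (by positivity)]
  exact A.norm_toEuclideanLin_sq_le v

theorem Fin.pos_of_lt_card_ne_zero {α : Type*} [LinearOrder α] [Zero α] {n : ℕ}
    {f : Fin n → α} (hf : Antitone f) (h0 : ∀ i, 0 ≤ f i) {i : Fin n}
    (hi : (i : ℕ) < #{j | f j ≠ 0}) : 0 < f i := by
  by_contra! hfi
  have hsub : ({j | f j ≠ 0} : Finset (Fin n)) ⊆ Iio i := by
    intro j hj
    simp only [mem_filter, mem_univ, true_and] at hj
    by_contra! hij
    exact hj (le_antisymm ((hf (not_lt.mp (by simpa using hij))).trans hfi) (h0 j))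
  have := (card_le_card hsub).trans_eq (Fin.card_Iio i)
  omega

theorem Finset.sum_le_card_ne_zero_mul {ι : Type*} [Fintype ι] (f : ι → ℝ) {c : ℝ}
    (hf : ∀ i, f i ≤ c) : ∑ i, f i ≤ #{i | f i ≠ 0} * c := by
  rw [← sum_filter_ne_zero]
  simpa using sum_le_card_nsmul _ _ _ fun i _ => hf i

theorem lt_mul_of_mul_div_div_lt_div {d a b c p q : ℝ} (hd : 0 < d) (hb : 0 < b) (hab : b ≤ a)
    (hc : 0 < c) (hq : 0 ≤ q) (hp : p ≤ d * a) (h : d * (a / b) / c < p / q) : q < c * b := by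
  have ha : 0 < a := hb.trans_le hab
  have hκ : 0 < d * (a / b) := by positivity
  have hq : 0 < q := hq.lt_of_ne' fun hq0 => by
    rw [hq0, div_zero] at h
    exact h.not_ge (div_pos hκ hc).le
  rw [div_lt_div_iff₀ hc hq] at h
  have : q * (d * (a / b)) < c * b * (d * (a / b)) :=
    calc q * (d * (a / b)) < p * c := by linarith
      _ ≤ d * a * c := by gcongr
      _ = c * b * (d * (a / b)) := by field_simp
  exact lt_of_mul_lt_mul_right this hκ.le

theorem div_mul_div_le_of_le_mul {d a b p : ℝ} (hd : 0 < d) (hb : 0 < b) (hab : b ≤ a)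
    (hp : p ≤ d * a) : p / (d * (a / b)) ≤ b := by
  have ha : 0 < a := hb.trans_le hab
  rw [div_le_iff₀ (by positivity)]
  calc p ≤ d * a := hp
    _ = b * (d * (a / b)) := by field_simp

-- `μ` lists the eigenvalues of `X̃_in X̃_inᵀ` in decreasing order: `λ_1 = μ 0`, `λ_d = μ (d-1)`.
/-- Let the columns of `X̃_in` be unit vectors spanning the `d`-subspace
`L*`, let the columns of `X̃_out` be unit vectors, let `μ` be an antitone listing of the
eigenvalues of `X̃_in X̃_inᵀ` (with orthonormal eigenbasis `bb`), so `λ_1 = μ 0`,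
`λ_d = μ (d-1)`, and `κ = λ_1 / λ_d`. If `N_in / N_out > d κ / cos γ` for `γ ∈ (0, π/2)`,
then `cos γ · λ_d − √N_out · ‖X̃_out‖₂ > 0`; in particular `λ_d ≥ N_in/(d κ)` and
`‖X̃_out‖₂ ≤ √N_out`. -/
theorem stmt_10 (D d Nin Nout : ℕ) (hd : 1 ≤ d) (hdD : d ≤ D)
    (Lstar : Submodule ℝ (EuclideanSpace ℝ (Fin D)))
    (hLstar : finrank ℝ Lstar = d)
    (Xin : Matrix (Fin D) (Fin Nin) ℝ)
    (hXinUnit : ∀ j, ∑ i, (Xin i j) ^ 2 = 1)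
    (hXinSpan : Submodule.span ℝ
      (Set.range fun j => (EuclideanSpace.equiv (Fin D) ℝ).symm fun i => Xin i j) = Lstar)
    (Xout : Matrix (Fin D) (Fin Nout) ℝ)
    (hXoutUnit : ∀ j, ∑ i, (Xout i j) ^ 2 = 1)
    (μ : Fin D → ℝ) (hμ : Antitone μ)
    (bb : OrthonormalBasis (Fin D) ℝ (EuclideanSpace ℝ (Fin D)))
    (heig : ∀ i, Matrix.toEuclideanLin (Xin * Xin.transpose) (bb i) = μ i • bb i)
    (γ : ℝ) (hγ : γ ∈ Set.Ioo 0 (Real.pi / 2))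
    (hSNR : (d : ℝ) * (μ ⟨0, by omega⟩ / μ ⟨d - 1, by omega⟩) / Real.cos γ <
      (Nin : ℝ) / Nout) :
    0 < Real.cos γ * μ ⟨d - 1, by omega⟩ - Real.sqrt Nout * specNorm Xout ∧
    (Nin : ℝ) / (d * (μ ⟨0, by omega⟩ / μ ⟨d - 1, by omega⟩)) ≤ μ ⟨d - 1, by omega⟩ ∧
    specNorm Xout ≤ Real.sqrt Nout := by
  have heig_toLin (i : Fin D) : Matrix.toLin (PiLp.basisFun 2 ℝ (Fin D)) (PiLp.basisFun 2 ℝ (Fin D))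
      (Xin * Xin.transpose) (bb.toBasis i) = μ i • bb.toBasis i := by
    rw [bb.coe_toBasis]; exact heig i
  have hμ_nonneg (i : Fin D) : 0 ≤ μ i :=
    (Matrix.isPositive_toEuclideanLin_iff.mpr (by
      simpa using Xin.posSemidef_self_mul_conjTranspose)).nonneg_of_apply_eq_smul
      (bb.orthonormal.ne_zero i) (heig i)
  have hcard : #{i | μ i ≠ 0} = d := by
    rw [← Matrix.rank_eq_card_ne_zero_of_eigenbasis _ _ heig_toLin, Matrix.rank_self_mul_transpose,
      Matrix.rank_eq_finrank_span_euclidean_cols, hXinSpan, hLstar]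
  have htrace : ∑ i, μ i = Nin := by
    rw [← Matrix.trace_eq_sum_of_eigenbasis _ _ heig_toLin, Matrix.trace_mul_transpose_eq_sum_sq,
      Xin.sum_sum_sq_eq_card_of_unit_cols hXinUnit, Fintype.card_fin]
  have hlamd : 0 < μ ⟨d - 1, by omega⟩ :=
    Fin.pos_of_lt_card_ne_zero hμ hμ_nonneg (by simp only [hcard]; omega)
  have hlamd_le : μ ⟨d - 1, by omega⟩ ≤ μ ⟨0, by omega⟩ := hμ (Fin.mk_le_mk.mpr (Nat.zero_le _))
  have hNin : (Nin : ℝ) ≤ d * μ ⟨0, by omega⟩ := by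
    simpa [← htrace, hcard] using
      Finset.sum_le_card_ne_zero_mul μ fun i => hμ (Fin.mk_le_mk.mpr (Nat.zero_le i))
  have hcos : 0 < Real.cos γ := Real.cos_pos_of_mem_Ioo ⟨by linarith [hγ.1, Real.pi_pos], hγ.2⟩
  have hspec : specNorm Xout ≤ √Nout := by
    simpa [Xout.sum_sum_sq_eq_card_of_unit_cols hXoutUnit] using specNorm_le_sqrt_sum_sq Xout
  have hd' : (0 : ℝ) < d := by exact_mod_cast hd
  refine ⟨sub_pos.mpr ?_, div_mul_div_le_of_le_mul hd' hlamd hlamd_le hNin, hspec⟩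
  calc √Nout * specNorm Xout ≤ √Nout * √Nout := by gcongr
    _ = Nout := Real.mul_self_sqrt (Nat.cast_nonneg _)
    _ < Real.cos γ * μ ⟨d - 1, by omega⟩ :=
      lt_mul_of_mul_div_div_lt_div hd' hlamd hlamd_le hcos (Nat.cast_nonneg _) hNin hSNR
end

section
/- Let L* be a d-subspace of ℝ^D with d ≥ 1, let the dataset consist of N_in nonzero inliers lying in L* whose unit normalizations span L*, and N_out ≥ 1 nonzero outliers; let X̃_in and X̃_out be the matrices of unit-normalized inliers and outliers, let κ = λ_1(X̃_in X̃_inᵀ)/λ_d(X̃_in X̃_inᵀ) be the spherical d-condition number, let A = X̃_in X̃_inᵀ + X̃_out X̃_outᵀ, and let L_SPCA be the span of d orthonormal eigenvectors of A corresponding to its d largest eigenvalues. If N_in/N_out > √3 · d · κ, then ‖P_{L_SPCA} − P_{L*}‖₂ ≤ √(2/3), i.e., the largest principal angle between L_SPCA and L* is at most arccos(1/√3). -/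
/-!
The inlier frame operator `T = X̃_in X̃_inᵀ` maps into `L*` and is positive definite there, so
`λ_d(T) > 0`; its trace `N_in` is at most `d λ_1(T)`, which turns the hypothesis into
`√3 N_out < λ_d(T)`. Adding the outlier frame operator `B`, of norm at most `N_out`, does not
decrease eigenvalues (min-max), so the top `d` eigenvalues of `A = T + B` exceed `√3 N_out`.
Writing `v ∈ L_SPCA` as `A w` with `λ_d(A) ‖w‖ ≤ ‖v‖`, the component of `v` orthogonal to `L*` is
that of `B w`, so `dist(v, L*) ≤ ‖v‖ / √3`. Since both subspaces have dimension `d`, this gives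
`dist(u, L_SPCA)² ≤ ‖u‖² / 2` for `u ∈ L*`, and the two one-sided bounds together bound
`‖P_{L_SPCA} − P_{L*}‖²` by `1/2 ≤ 2/3`.
-/

open Module

/-- The orthogonal projection onto a subspace `L` of `ℝ^D`, as a map `ℝ^D → ℝ^D`. -/
noncomputable def projCLM {D : ℕ} (L : Submodule ℝ (EuclideanSpace ℝ (Fin D))) :
    EuclideanSpace ℝ (Fin D) →L[ℝ] EuclideanSpace ℝ (Fin D) :=
  L.subtypeL.comp (L.orthogonalProjectionOnto)

open RealInnerProductSpace

lemma Submodule.exists_mem_inf_ne_zero_of_finrank_lt {K V : Type*} [DivisionRing K]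
    [AddCommGroup V] [Module K V] [FiniteDimensional K V] {s t : Submodule K V}
    (h : finrank K V < finrank K s + finrank K t) : ∃ x ∈ s, x ∈ t ∧ x ≠ 0 := by
  by_contra! hst
  exact h.not_ge <| Submodule.finrank_add_finrank_le_of_disjoint <| Submodule.disjoint_def.mpr hst

lemma mul_lt_of_mul_mul_div_lt_div {r d a b N M : ℝ} (hb : 0 < b) (hM : 0 < M)
    (hda : 0 < d * a) (hN : N ≤ d * a) (h : r * d * (a / b) < N / M) : r * M < b := by
  rw [← mul_div_assoc, div_lt_div_iff₀ hb hM] at h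
  have : d * a * (r * M) < d * a * b := by nlinarith [mul_le_mul_of_nonneg_right hN hb.le]
  exact lt_of_mul_lt_mul_left this hda.le

section FrameOperator

variable {E ι : Type*} [NormedAddCommGroup E] [InnerProductSpace ℝ E] [Fintype ι]

/-- The frame operator of a finite family: `X Xᵀ` for the matrix `X` with columns `u j`. -/
noncomputable def frameOp (u : ι → E) : E →ₗ[ℝ] E :=
  ∑ j, (innerₗ E (u j)).smulRight (u j)

lemma frameOp_apply (u : ι → E) (x : E) : frameOp u x = ∑ j, ⟪u j, x⟫ • u j := by
  simp [frameOp]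

lemma Matrix.toEuclideanLin_of_mul_transpose {m : Type*} [Fintype m] [DecidableEq m]
    (u : ι → EuclideanSpace ℝ m) :
    Matrix.toEuclideanLin (Matrix.of (fun i j => u j i) * (Matrix.of fun i j => u j i).transpose)
      = frameOp u := by
  ext x i
  simp only [Matrix.ofLp_toLpLin, Matrix.toLin'_apply, Matrix.mulVec, dotProduct,
    Matrix.mul_apply, Matrix.of_apply, Matrix.transpose_apply, Finset.sum_mul, frameOp_apply,
    PiLp.inner_apply, RCLike.inner_apply, Real.ringHom_apply, WithLp.ofLp_sum, WithLp.ofLp_smul,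
    Finset.sum_apply, Pi.smul_apply, smul_eq_mul]
  rw [Finset.sum_comm]
  exact Finset.sum_congr rfl fun j _ => Finset.sum_congr rfl fun k _ => by ring

lemma inner_frameOp_self (u : ι → E) (x : E) : ⟪frameOp u x, x⟫ = ∑ j, ⟪u j, x⟫ ^ 2 := by
  simp [frameOp_apply, sum_inner, real_inner_smul_left, sq]

lemma frameOp_mem_span (u : ι → E) (x : E) : frameOp u x ∈ Submodule.span ℝ (Set.range u) := by
  rw [frameOp_apply]
  exact Submodule.sum_mem _ fun j _ => Submodule.smul_mem _ _ (Submodule.subset_span ⟨j, rfl⟩)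

lemma inner_frameOp_self_pos {u : ι → E} {x : E} (hx : x ∈ Submodule.span ℝ (Set.range u))
    (hx0 : x ≠ 0) : 0 < ⟪frameOp u x, x⟫ := by
  rw [inner_frameOp_self]
  by_contra! h
  have hperp : ∀ j, ⟪x, u j⟫ = 0 := fun j => by
    have := (Fintype.sum_eq_zero_iff_of_nonneg fun j => sq_nonneg ⟪u j, x⟫).mp
      (le_antisymm h (by positivity))
    rw [real_inner_comm]
    exact pow_eq_zero_iff two_ne_zero |>.mp (congrFun this j)
  have hspan : Submodule.span ℝ (Set.range u) ≤ (ℝ ∙ x)ᗮ := Submodule.span_le.mpr <| by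
    rintro _ ⟨j, rfl⟩
    exact Submodule.mem_orthogonal_singleton_iff_inner_right.mpr (hperp j)
  exact hx0 <| inner_self_eq_zero.mp <| Submodule.mem_orthogonal_singleton_iff_inner_right.mp
    (hspan hx)

lemma norm_frameOp_le (u : ι → E) (x : E) : ‖frameOp u x‖ ≤ (∑ j, ‖u j‖ ^ 2) * ‖x‖ := by
  rw [frameOp_apply, Finset.sum_mul]
  refine (norm_sum_le _ _).trans (Finset.sum_le_sum fun j _ => ?_)
  rw [norm_smul, Real.norm_eq_abs]
  calc |⟪u j, x⟫| * ‖u j‖ ≤ ‖u j‖ * ‖x‖ * ‖u j‖ := by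
        gcongr; exact abs_real_inner_le_norm _ _
    _ = ‖u j‖ ^ 2 * ‖x‖ := by ring

lemma sum_sq_norm_le_finrank_mul {u : ι → E} {L : Submodule ℝ E} [FiniteDimensional ℝ L]
    (hu : ∀ j, u j ∈ L) {m : ℝ} (hm : ∀ x, ⟪frameOp u x, x⟫ ≤ m * ‖x‖ ^ 2) :
    ∑ j, ‖u j‖ ^ 2 ≤ finrank ℝ L * m := by
  let e := stdOrthonormalBasis ℝ L
  -- both sides are the trace of `frameOp u`, evaluated on the orthonormal basis `e` of `L`
  calc ∑ j, ‖u j‖ ^ 2 = ∑ j, ∑ k, ⟪u j, e k⟫ ^ 2 := Finset.sum_congr rfl fun j _ =>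
        (e.sum_sq_inner_left ⟨u j, hu j⟩).symm
    _ = ∑ k, ⟪frameOp u (e k), e k⟫ := by
        rw [Finset.sum_comm]; simp only [inner_frameOp_self]
    _ ≤ ∑ _k, m := Finset.sum_le_sum fun k _ => by
        have hek : ‖(e k : E)‖ = 1 := e.orthonormal.1 k
        simpa [hek] using hm (e k)
    _ = finrank ℝ L * m := by simp

end FrameOperator

section Eigenbasis

variable {E ι : Type*} [NormedAddCommGroup E] [InnerProductSpace ℝ E] [Fintype ι]

lemma OrthonormalBasis.inner_eq_zero_of_mem_span_image (b : OrthonormalBasis ι ℝ E) {S : Set ι}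
    {x : E} (hx : x ∈ Submodule.span ℝ (b '' S)) {i : ι} (hi : i ∉ S) : ⟪b i, x⟫ = 0 := by
  have : Submodule.span ℝ (b '' S) ≤ (ℝ ∙ b i)ᗮ := Submodule.span_le.mpr <| by
    rintro _ ⟨j, hj, rfl⟩
    exact Submodule.mem_orthogonal_singleton_iff_inner_right.mpr <|
      b.orthonormal.2 fun hij => hi (hij ▸ hj)
  exact Submodule.mem_orthogonal_singleton_iff_inner_right.mp (this hx)

lemma OrthonormalBasis.finrank_span_image (b : OrthonormalBasis ι ℝ E) (S : Set ι) [Fintype S] :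
    finrank ℝ (Submodule.span ℝ (b '' S)) = Fintype.card S := by
  rw [Set.image_eq_range]
  exact finrank_span_eq_card (b.orthonormal.linearIndependent.comp _ Subtype.val_injective)

variable {T : E →ₗ[ℝ] E} {b : OrthonormalBasis ι ℝ E} {t : ι → ℝ}

lemma inner_map_self_eq_sum (hb : ∀ i, T (b i) = t i • b i) (x : E) :
    ⟪T x, x⟫ = ∑ i, t i * ⟪b i, x⟫ ^ 2 := by
  conv_lhs => rw [← b.sum_repr' x]
  simp only [map_sum, map_smul, hb, smul_smul, b.orthonormal.inner_sum, conj_trivial]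
  exact Finset.sum_congr rfl fun i _ => by ring

lemma inner_map_self_le_of_mem_span (hb : ∀ i, T (b i) = t i • b i) {S : Set ι} {m : ℝ}
    (ht : ∀ i ∈ S, t i ≤ m) {x : E} (hx : x ∈ Submodule.span ℝ (b '' S)) :
    ⟪T x, x⟫ ≤ m * ‖x‖ ^ 2 := by
  rw [inner_map_self_eq_sum hb, ← b.sum_sq_inner_right, Finset.mul_sum]
  refine Finset.sum_le_sum fun i _ => ?_
  by_cases hi : i ∈ S
  · exact mul_le_mul_of_nonneg_right (ht i hi) (sq_nonneg _)
  · simp [b.inner_eq_zero_of_mem_span_image hx hi]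

lemma le_inner_map_self_of_mem_span (hb : ∀ i, T (b i) = t i • b i) {S : Set ι} {m : ℝ}
    (ht : ∀ i ∈ S, m ≤ t i) {x : E} (hx : x ∈ Submodule.span ℝ (b '' S)) :
    m * ‖x‖ ^ 2 ≤ ⟪T x, x⟫ := by
  rw [inner_map_self_eq_sum hb, ← b.sum_sq_inner_right, Finset.mul_sum]
  refine Finset.sum_le_sum fun i _ => ?_
  by_cases hi : i ∈ S
  · exact mul_le_mul_of_nonneg_right (ht i hi) (sq_nonneg _)
  · simp [b.inner_eq_zero_of_mem_span_image hx hi]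

lemma inner_map_self_le (hb : ∀ i, T (b i) = t i • b i) {m : ℝ} (ht : ∀ i, t i ≤ m) (x : E) :
    ⟪T x, x⟫ ≤ m * ‖x‖ ^ 2 :=
  inner_map_self_le_of_mem_span hb (S := Set.univ) (fun i _ => ht i) <| by
    rw [Set.image_univ, ← b.coe_toBasis, b.toBasis.span_eq]; trivial

lemma exists_apply_eq_of_mem_span (hb : ∀ i, T (b i) = t i • b i) {S : Set ι} {m : ℝ}
    (hm : 0 < m) (ht : ∀ i ∈ S, m ≤ t i) {v : E} (hv : v ∈ Submodule.span ℝ (b '' S)) :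
    ∃ w, T w = v ∧ m * ‖w‖ ≤ ‖v‖ := by
  have hsurj : Submodule.span ℝ (b '' S) ≤ (Submodule.span ℝ (b '' S)).map T :=
    Submodule.span_le.mpr <| by
      rintro _ ⟨i, hi, rfl⟩
      refine ⟨(t i)⁻¹ • b i, Submodule.smul_mem _ _ (Submodule.subset_span ⟨i, hi, rfl⟩), ?_⟩
      rw [map_smul, hb, smul_smul, inv_mul_cancel₀ (hm.trans_le (ht i hi)).ne', one_smul]
  obtain ⟨w, hw, rfl⟩ := hsurj hv
  refine ⟨w, rfl, ?_⟩
  rcases (norm_nonneg w).eq_or_lt with hw0 | hw0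
  · simp [← hw0]
  · have := (le_inner_map_self_of_mem_span hb ht hw).trans (real_inner_le_norm (T w) w)
    nlinarith

end Eigenbasis

section MinMax

variable {E : Type*} [NormedAddCommGroup E] [InnerProductSpace ℝ E] {n : ℕ} {T : E →ₗ[ℝ] E}
  {b : OrthonormalBasis (Fin n) ℝ E} {t : Fin n → ℝ}

/-- The easy half of the Courant–Fischer min-max principle. -/
lemma exists_ne_zero_mem_inner_map_self_le (hb : ∀ i, T (b i) = t i • b i) (ht : Antitone t)
    {W : Submodule ℝ E} {k : Fin n} (hW : k + 1 ≤ finrank ℝ W) :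
    ∃ x ∈ W, x ≠ 0 ∧ ⟪T x, x⟫ ≤ t k * ‖x‖ ^ 2 := by
  have := b.toBasis.finiteDimensional_of_finite
  have hE : finrank ℝ E = n := by simp [finrank_eq_card_basis b.toBasis]
  have hV : finrank ℝ (Submodule.span ℝ (b '' Set.Ici k)) = n - k := by
    simp [b.finrank_span_image]
  obtain ⟨x, hxW, hxV, hx0⟩ := Submodule.exists_mem_inf_ne_zero_of_finrank_lt
    (s := W) (t := Submodule.span ℝ (b '' Set.Ici k)) (by omega)
  exact ⟨x, hxW, hx0, inner_map_self_le_of_mem_span hb (fun i hi => ht hi) hxV⟩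

lemma eigenvalue_pos_of_finrank_le (hb : ∀ i, T (b i) = t i • b i) (ht : Antitone t)
    {W : Submodule ℝ E} {k : Fin n} (hW : k + 1 ≤ finrank ℝ W)
    (hpos : ∀ x ∈ W, x ≠ 0 → 0 < ⟪T x, x⟫) : 0 < t k := by
  obtain ⟨x, hxW, hx0, hle⟩ := exists_ne_zero_mem_inner_map_self_le hb ht hW
  exact pos_of_mul_pos_left ((hpos x hxW hx0).trans_le hle) (by positivity)

lemma eigenvalue_mono {A : E →ₗ[ℝ] E} {c : OrthonormalBasis (Fin n) ℝ E} {s : Fin n → ℝ}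
    (hb : ∀ i, T (b i) = t i • b i) (hc : ∀ i, A (c i) = s i • c i)
    (ht : Antitone t) (hs : Antitone s) (hTA : ∀ x, ⟪T x, x⟫ ≤ ⟪A x, x⟫) (k : Fin n) :
    t k ≤ s k := by
  obtain ⟨x, hxW, hx0, hle⟩ := exists_ne_zero_mem_inner_map_self_le hc hs
    (W := Submodule.span ℝ (b '' Set.Iic k)) (k := k) (by simp [b.finrank_span_image])
  have := ((le_inner_map_self_of_mem_span hb (fun i hi => ht hi) hxW).trans (hTA x)).trans hle
  exact le_of_mul_le_mul_right this (by positivity)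

end MinMax

section Projection

variable {E : Type*} [NormedAddCommGroup E] [InnerProductSpace ℝ E]

lemma Submodule.norm_sub_starProjection_le (K : Submodule ℝ E) [K.HasOrthogonalProjection]
    (x : E) : ‖x - K.starProjection x‖ ≤ ‖x‖ := by
  simpa using Kᗮ.norm_starProjection_apply_le x

/-- A Davis–Kahan type `sin θ` bound. -/
lemma Submodule.norm_sub_starProjection_sq_le_of_mem_span (L : Submodule ℝ E)
    [L.HasOrthogonalProjection] {ι : Type*} [Fintype ι] {T B : E →ₗ[ℝ] E}
    {b : OrthonormalBasis ι ℝ E} {t : ι → ℝ} (hb : ∀ i, (T + B) (b i) = t i • b i)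
    (hT : ∀ x, T x ∈ L) {β : ℝ} (hβ : 0 ≤ β) (hB : ∀ x, ‖B x‖ ≤ β * ‖x‖)
    {S : Set ι} {m : ℝ} (hm : 0 < m) (ht : ∀ i ∈ S, m ≤ t i) {v : E}
    (hv : v ∈ Submodule.span ℝ (b '' S)) :
    ‖v - L.starProjection v‖ ^ 2 ≤ (β / m) ^ 2 * ‖v‖ ^ 2 := by
  obtain ⟨w, rfl, hw⟩ := exists_apply_eq_of_mem_span hb hm ht hv
  have hdist : (T + B) w - L.starProjection ((T + B) w) = B w - L.starProjection (B w) := by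
    simp [L.starProjection_eq_self_iff.mpr (hT w)]
  have : m * ‖(T + B) w - L.starProjection ((T + B) w)‖ ≤ m * (β / m * ‖(T + B) w‖) := calc
    _ ≤ m * (β * ‖w‖) := by
        rw [hdist]; gcongr; exact (L.norm_sub_starProjection_le _).trans (hB w)
    _ = β * (m * ‖w‖) := by ring
    _ ≤ β * ‖(T + B) w‖ := by gcongr
    _ = m * (β / m * ‖(T + B) w‖) := by field_simp
  rw [← mul_pow]
  exact pow_le_pow_left₀ (norm_nonneg _) (le_of_mul_le_mul_left this hm) 2

variable [FiniteDimensional ℝ E] {U V : Submodule ℝ E}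

/-- `U.starProjection` maps `V` injectively, hence onto `U`; lifting `u ∈ U` to `v ∈ V`, the
distance from `u` to `V` is at most that of `v - u`. -/
lemma Submodule.norm_sub_starProjection_sq_le_of_finrank_eq (h : finrank ℝ V = finrank ℝ U)
    {c : ℝ} (hc : c < 1) (hV : ∀ v ∈ V, ‖v - U.starProjection v‖ ^ 2 ≤ c * ‖v‖ ^ 2)
    {u : E} (hu : u ∈ U) : (1 - c) * ‖u - V.starProjection u‖ ^ 2 ≤ c * ‖u‖ ^ 2 := by
  let φ : V →ₗ[ℝ] U := U.orthogonalProjectionOnto.toLinearMap ∘ₗ V.subtype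
  have hφ : Function.Injective φ := by
    rw [injective_iff_map_eq_zero]
    intro v hv
    have h0 : U.starProjection v = 0 := congrArg Subtype.val hv
    have := hV v v.2
    rw [h0, sub_zero] at this
    refine Subtype.ext <| norm_eq_zero.mp <| le_antisymm (not_lt.mp fun hpos => ?_) (norm_nonneg _)
    nlinarith [mul_pos (sub_pos.mpr hc) (pow_pos hpos 2)]
  obtain ⟨v, hv⟩ := (LinearMap.injective_iff_surjective_of_finrank_eq_finrank h).mp hφ ⟨u, hu⟩
  have hPv : U.starProjection v = u := congrArg Subtype.val hv
  set e := (v : E) - u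
  have he : u - V.starProjection u = -(e - V.starProjection e) := by
    simp [e, V.starProjection_eq_self_iff.mpr v.2]
  have hpyth : ‖(v : E)‖ ^ 2 = ‖u‖ ^ 2 + ‖e‖ ^ 2 := by
    rw [U.norm_sq_eq_add_norm_sq_starProjection (v : E), U.starProjection_orthogonal_val, hPv]
  have hev := hV v v.2
  rw [hPv, hpyth] at hev
  have := pow_le_pow_left₀ (norm_nonneg _) (V.norm_sub_starProjection_le e) 2
  rw [he, norm_neg]
  nlinarith

lemma Submodule.norm_starProjection_sq_le_of_mem_orthogonal {s : ℝ} (hs : 0 ≤ s)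
    (hU : ∀ u ∈ U, ‖u - V.starProjection u‖ ^ 2 ≤ s * ‖u‖ ^ 2) {r : E} (hr : r ∈ Vᗮ) :
    ‖U.starProjection r‖ ^ 2 ≤ s * ‖r‖ ^ 2 := by
  set u := U.starProjection r
  have hu : ‖u‖ ^ 2 ≤ ‖u - V.starProjection u‖ * ‖r‖ := calc
    ‖u‖ ^ 2 = ⟪u, r⟫ := by
      have := U.starProjection_inner_eq_zero r u (U.starProjection_apply_mem r)
      rw [inner_sub_left, real_inner_comm] at this
      rw [← real_inner_self_eq_norm_sq]
      linarith
    _ = ⟪u - V.starProjection u, r⟫ := by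
      rw [inner_sub_left,
        Submodule.inner_right_of_mem_orthogonal (V.starProjection_apply_mem u) hr, sub_zero]
    _ ≤ _ := real_inner_le_norm _ _
  have h1 : (‖u‖ ^ 2) ^ 2 ≤ (‖u - V.starProjection u‖ * ‖r‖) ^ 2 :=
    pow_le_pow_left₀ (sq_nonneg _) hu 2
  have h2 := mul_le_mul_of_nonneg_right (hU u (U.starProjection_apply_mem r)) (sq_nonneg ‖r‖)
  by_contra! h
  have hA : 0 < ‖u‖ ^ 2 := (by positivity : 0 ≤ s * ‖r‖ ^ 2).trans_lt h
  nlinarith [mul_lt_mul_of_pos_left h hA]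

lemma Submodule.norm_starProjection_sub_le {s : ℝ} (hs : 0 ≤ s)
    (hU : ∀ u ∈ U, ‖u - V.starProjection u‖ ^ 2 ≤ s * ‖u‖ ^ 2)
    (hV : ∀ v ∈ V, ‖v - U.starProjection v‖ ^ 2 ≤ s * ‖v‖ ^ 2) :
    ‖V.starProjection - U.starProjection‖ ≤ √s := by
  refine ContinuousLinearMap.opNorm_le_bound _ (Real.sqrt_nonneg _) fun x => ?_
  set q := V.starProjection x
  set r := x - q
  have hsplit : (V.starProjection - U.starProjection) x
      = (q - U.starProjection q) - U.starProjection r := by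
    simp [r, map_sub, q]
  have horth : ⟪q - U.starProjection q, U.starProjection r⟫ = 0 :=
    Submodule.inner_left_of_mem_orthogonal (U.starProjection_apply_mem r)
      (U.sub_starProjection_mem_orthogonal q)
  have hq := hV q (V.starProjection_apply_mem x)
  have hr := Submodule.norm_starProjection_sq_le_of_mem_orthogonal hs hU
    (V.sub_starProjection_mem_orthogonal x)
  have hx : ‖x‖ ^ 2 = ‖q‖ ^ 2 + ‖r‖ ^ 2 := by
    rw [V.norm_sq_eq_add_norm_sq_starProjection x, V.starProjection_orthogonal_val]
  have : ‖(V.starProjection - U.starProjection) x‖ ^ 2 ≤ (√s * ‖x‖) ^ 2 := by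
    rw [hsplit, norm_sub_sq_real, horth, mul_pow, Real.sq_sqrt hs]
    nlinarith
  exact (pow_le_pow_iff_left₀ (norm_nonneg _) (by positivity) two_ne_zero).mp this

lemma Submodule.norm_starProjection_sub_le_of_finrank_eq (h : finrank ℝ V = finrank ℝ U)
    {c : ℝ} (hc0 : 0 ≤ c) (hc : c < 1)
    (hV : ∀ v ∈ V, ‖v - U.starProjection v‖ ^ 2 ≤ c * ‖v‖ ^ 2) :
    ‖V.starProjection - U.starProjection‖ ≤ √(c / (1 - c)) := by
  have h1c : 0 < 1 - c := sub_pos.mpr hc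
  refine norm_starProjection_sub_le (by positivity) (fun u hu => ?_) fun v hv =>
    (hV v hv).trans (by gcongr; exact le_div_self hc0 h1c (by linarith))
  have := norm_sub_starProjection_sq_le_of_finrank_eq h hc hV hu
  rw [div_mul_eq_mul_div, le_div_iff₀ h1c]
  linarith

end Projection

/-- (SPCA initialization with adversarial outliers.) With nonzero inliers in
the `d`-subspace `L*` whose unit normalizations span `L*`, nonzero outliers, spherical
`d`-condition number `κ = λ_1(X̃_in X̃_inᵀ)/λ_d(X̃_in X̃_inᵀ)`, and `L_SPCA` the span of `d`
orthonormal eigenvectors of `A = X̃_in X̃_inᵀ + X̃_out X̃_outᵀ` corresponding to its `d`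
largest eigenvalues: if `N_in/N_out > √3·d·κ`, then `‖P_{L_SPCA} − P_{L*}‖₂ ≤ √(2/3)`,
i.e. the largest principal angle between `L_SPCA` and `L*` is at most `arccos(1/√3)`. -/
theorem stmt_12 (D d Nin Nout : ℕ) (hd : 1 ≤ d) (hdD : d ≤ D) (hNout : 1 ≤ Nout)
    (Lstar : Submodule ℝ (EuclideanSpace ℝ (Fin D)))
    (hLstar : finrank ℝ Lstar = d)
    (a : Fin Nin → EuclideanSpace ℝ (Fin D)) (ha0 : ∀ i, a i ≠ 0) (haL : ∀ i, a i ∈ Lstar)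
    (hspan : Submodule.span ℝ (Set.range fun j => ‖a j‖⁻¹ • a j) = Lstar)
    (o : Fin Nout → EuclideanSpace ℝ (Fin D)) (ho0 : ∀ i, o i ≠ 0)
    (Xin : Matrix (Fin D) (Fin Nin) ℝ) (hXin : Xin = Matrix.of fun i j => a j i / ‖a j‖)
    (Xout : Matrix (Fin D) (Fin Nout) ℝ) (hXout : Xout = Matrix.of fun i j => o j i / ‖o j‖)
    -- an antitone listing `ν` of the eigenvalues of `X̃_in X̃_inᵀ`, so `λ_1 = ν 0` and
    -- `λ_d = ν (d-1)`; the spherical `d`-condition number is `κ = ν 0 / ν (d-1)`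
    (ν : Fin D → ℝ) (hν : Antitone ν)
    (cc : OrthonormalBasis (Fin D) ℝ (EuclideanSpace ℝ (Fin D)))
    (heigIn : ∀ i, Matrix.toEuclideanLin (Xin * Xin.transpose) (cc i) = ν i • cc i)
    -- an antitone listing `μ` of the eigenvalues of `A`, with orthonormal eigenbasis `bb`
    (μ : Fin D → ℝ) (hμ : Antitone μ)
    (bb : OrthonormalBasis (Fin D) ℝ (EuclideanSpace ℝ (Fin D)))
    (heigA : ∀ i, Matrix.toEuclideanLin (Xin * Xin.transpose + Xout * Xout.transpose) (bb i)
      = μ i • bb i)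
    -- `L_SPCA`: the span of the `d` orthonormal eigenvectors of `A` corresponding to its
    -- `d` largest eigenvalues
    (Lspca : Submodule ℝ (EuclideanSpace ℝ (Fin D)))
    (hLspca : Lspca = Submodule.span ℝ (Set.range fun j : Fin d => bb (Fin.castLE hdD j)))
    (hSNR : Real.sqrt 3 * d * (ν ⟨0, by omega⟩ / ν ⟨d - 1, by omega⟩) <
      (Nin : ℝ) / Nout) :
    ‖projCLM Lspca - projCLM Lstar‖ ≤ Real.sqrt (2 / 3) := by
  set ta := fun j => ‖a j‖⁻¹ • a j
  set tv := fun j => ‖o j‖⁻¹ • o j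
  have hXin' : Xin = Matrix.of fun i j => ta j i := by simp [hXin, ta, div_eq_inv_mul]
  have hXout' : Xout = Matrix.of fun i j => tv j i := by simp [hXout, tv, div_eq_inv_mul]
  rw [hXin', hXout', map_add, Matrix.toEuclideanLin_of_mul_transpose,
    Matrix.toEuclideanLin_of_mul_transpose] at heigA
  rw [hXin', Matrix.toEuclideanLin_of_mul_transpose] at heigIn
  have hta : ∀ j, ‖ta j‖ = 1 := fun j => norm_smul_inv_norm (ha0 j)
  have htv : ∀ j, ‖tv j‖ = 1 := fun j => norm_smul_inv_norm (ho0 j)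
  have hTL : ∀ x, frameOp ta x ∈ Lstar := fun x => hspan ▸ frameOp_mem_span ta x
  have hνd : 0 < ν ⟨d - 1, by omega⟩ := eigenvalue_pos_of_finrank_le heigIn hν (W := Lstar)
    (by simp [hLstar]; omega) fun x hx hx0 => inner_frameOp_self_pos (hspan ▸ hx) hx0
  have hNin : (Nin : ℝ) ≤ d * ν ⟨0, by omega⟩ := by
    have := sum_sq_norm_le_finrank_mul (u := ta) (fun j => Lstar.smul_mem _ (haL j))
      (inner_map_self_le heigIn (m := ν ⟨0, by omega⟩) fun i => hν (Nat.zero_le i))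
    simpa [hta, hLstar] using this
  have hNout' : (0 : ℝ) < Nout := Nat.cast_pos.mpr hNout
  have hgap : √3 * Nout < ν ⟨d - 1, by omega⟩ := mul_lt_of_mul_mul_div_lt_div hνd hNout'
    (mul_pos (Nat.cast_pos.mpr hd) (hνd.trans_le (hν (Nat.zero_le _)))) hNin hSNR
  have hμd : ν ⟨d - 1, by omega⟩ ≤ μ ⟨d - 1, by omega⟩ := eigenvalue_mono heigIn heigA hν hμ
    (fun x => by
      rw [LinearMap.add_apply, inner_add_left, inner_frameOp_self tv]
      exact le_add_of_nonneg_right (by positivity)) _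
  have hLspca' : Lspca = Submodule.span ℝ (bb '' Set.range (Fin.castLE hdD)) := by
    rw [hLspca, ← Set.range_comp]; rfl
  have htan : ∀ v ∈ Lspca, ‖v - Lstar.starProjection v‖ ^ 2 ≤ 1 / 3 * ‖v‖ ^ 2 := fun v hv => by
    have := Lstar.norm_sub_starProjection_sq_le_of_mem_span heigA hTL hNout'.le
      (fun x => by simpa [htv] using norm_frameOp_le tv x) (m := √3 * Nout) (by positivity)
      (by rintro _ ⟨j, rfl⟩; exact hgap.le.trans (hμd.trans (hμ (by simp [Fin.le_def]; omega))))
      (hLspca' ▸ hv)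
    rwa [div_mul_cancel_right₀ hNout'.ne', inv_pow, Real.sq_sqrt (by norm_num), ← one_div] at this
  have hrank : finrank ℝ Lspca = finrank ℝ Lstar := by
    rw [hLspca', bb.finrank_span_image, Set.card_range_of_injective (Fin.castLE_injective hdD),
      Fintype.card_fin, hLstar]
  exact (Submodule.norm_starProjection_sub_le_of_finrank_eq hrank (by norm_num) (by norm_num)
    htan).trans (Real.sqrt_le_sqrt (by norm_num))
end

section
/- Let x_1, …, x_N be points in ℝ^D (duplicates allowed) and let p ∈ ℝ^D be such that strictly more than N/2 of the points x_i equal p. Then p is the unique minimizer over y ∈ ℝ^D of the function y ↦ Σ_{i=1}^N ‖y − x_i‖, where ‖·‖ is the Euclidean norm; that is, p is the unique geometric median of the dataset. -/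
/-- If strictly more than `N/2` of the points `x_1, …, x_N` equal `p`, then
`p` is the unique minimizer over `y` of `∑ i, ‖y − x_i‖`, i.e. the unique geometric median. -/
theorem stmt_13 (D N : ℕ) (x : Fin N → EuclideanSpace ℝ (Fin D))
    (p : EuclideanSpace ℝ (Fin D))
    (hmaj : (N : ℝ) / 2 < Nat.card {i : Fin N // x i = p}) :
    (∀ y : EuclideanSpace ℝ (Fin D), ∑ i, ‖p - x i‖ ≤ ∑ i, ‖y - x i‖) ∧
    (∀ y : EuclideanSpace ℝ (Fin D), y ≠ p → ∑ i, ‖p - x i‖ < ∑ i, ‖y - x i‖) := by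
  classical
  set S := Finset.univ.filter (fun i => x i = p) with hS
  have hcard : (Nat.card {i : Fin N // x i = p} : ℝ) = S.card := by
    rw [Nat.card_eq_fintype_card, Fintype.card_subtype]
  rw [hcard] at hmaj
  have hle : S.card ≤ N := by
    simpa using (Finset.card_filter_le Finset.univ (fun i => x i = p))
  have key : ∀ y : EuclideanSpace ℝ (Fin D),
      ∑ i, ‖p - x i‖ + (2 * (S.card : ℝ) - N) * ‖y - p‖ ≤ ∑ i, ‖y - x i‖ := by
    intro y
    have hsum : ∑ i : Fin N, (if x i = p then ‖y - p‖ else -‖y - p‖)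
        = (2 * (S.card : ℝ) - N) * ‖y - p‖ := by
      rw [Finset.sum_ite, Finset.sum_const, Finset.sum_const]
      have hcomp : (Finset.univ.filter (fun i => ¬ x i = p)).card = N - S.card := by
        rw [Finset.filter_not, Finset.card_sdiff_of_subset (Finset.filter_subset _ _),
          Finset.card_univ, Fintype.card_fin]
      rw [hcomp, nsmul_eq_mul, nsmul_eq_mul, Nat.cast_sub hle]
      ring
    calc ∑ i, ‖p - x i‖ + (2 * (S.card : ℝ) - N) * ‖y - p‖
        = ∑ i : Fin N, (‖p - x i‖ + if x i = p then ‖y - p‖ else -‖y - p‖) := by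
          rw [Finset.sum_add_distrib, hsum]
      _ ≤ ∑ i, ‖y - x i‖ := by
          apply Finset.sum_le_sum
          intro i _
          by_cases h : x i = p
          · simp [h, norm_sub_rev y p]
          · simp only [h, if_false]
            have := norm_sub_le_norm_sub_add_norm_sub p y (x i)
            have h2 : ‖p - y‖ = ‖y - p‖ := norm_sub_rev p y
            linarith
  have hc : 0 < 2 * (S.card : ℝ) - N := by linarith
  constructor
  · intro y
    have := key y
    nlinarith [norm_nonneg (y - p)]
  · intro y hy
    have := key y
    have hpos : 0 < ‖y - p‖ := by
      rw [norm_pos_iff]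
      exact sub_ne_zero.mpr hy
    nlinarith
end

section
/- Let L* be a d-subspace of ℝ^D, let b ∈ ℝ^D, and let Q denote the orthogonal projection of ℝ^D onto the orthogonal complement of L*. Then: (i) Qb is the unique vector of minimal Euclidean norm among all b' ∈ ℝ^D with b − b' ∈ L* (i.e., among all offsets representing the affine subspace b + L*); (ii) if a dataset x_1, …, x_N in ℝ^D has N_in points lying in the affine subspace b + L* and N_out = N − N_in other points, with N_in > N_out, then Qx_i = Qb for every point x_i in b + L*, and Qb is the unique minimizer over y ∈ ℝ^D of Σ_{i=1}^N ‖y − Q x_i‖; that is, the geometric median of the dataset projected onto the orthogonal complement of L* exactly recovers the minimal-norm offset of the affine subspace. -/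
open Module Finset

/-!
Projecting onto `L*ᗮ` collapses the affine subspace `b + L*` to the single point `Qb`, and by
Pythagoras every other offset `b'` of it has `‖b'‖² = ‖Qb‖² + ‖b' - Qb‖²`. After projection the
inliers all sit at `Qb`; moving a candidate median `y` away from `Qb` increases the distance to each
of the `N_in` inliers by `‖y - Qb‖` and decreases the distance to each of the `N_out` outliers by at
most that much, so a strict majority of inliers pins the median at `Qb`.
-/

namespace Submodule

variable {𝕜 E : Type*} [RCLike 𝕜] [NormedAddCommGroup E] [InnerProductSpace 𝕜 E]
  (K : Submodule 𝕜 E) [K.HasOrthogonalProjection]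

theorem starProjection_orthogonal_eq_iff {u v : E} :
    Kᗮ.starProjection u = Kᗮ.starProjection v ↔ u - v ∈ K := by
  rw [← K.starProjection_eq_self_iff, map_sub, starProjection_orthogonal_val,
    starProjection_orthogonal_val, sub_eq_sub_iff_sub_eq_sub, eq_comm]

theorem sub_starProjection_orthogonal_mem (v : E) : v - Kᗮ.starProjection v ∈ K := by
  simp

theorem norm_starProjection_orthogonal_lt {u v : E} (h : u - v ∈ K)
    (hne : v ≠ Kᗮ.starProjection u) : ‖Kᗮ.starProjection u‖ < ‖v‖ := by
  have hQv : Kᗮ.starProjection v = Kᗮ.starProjection u :=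
    ((K.starProjection_orthogonal_eq_iff).2 h).symm
  have hPv : K.starProjection v ≠ 0 := fun h0 ↦ hne <|
    calc v = K.starProjection v + Kᗮ.starProjection v :=
          (K.starProjection_add_starProjection_orthogonal v).symm
      _ = Kᗮ.starProjection u := by rw [h0, zero_add, hQv]
  have pythagoras := K.norm_sq_eq_add_norm_sq_starProjection v
  rw [hQv] at pythagoras
  refine lt_of_pow_lt_pow_left₀ 2 (norm_nonneg v) ?_
  rw [pythagoras]
  exact lt_add_of_pos_left _ (by positivity)

end Submodule

section GeometricMedian

variable {ι E : Type*} [Fintype ι] [DecidableEq ι]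

theorem sum_norm_sub_add_card_sub_card_compl_mul_le [SeminormedAddCommGroup E] {z : ι → E}
    {c : E} {S : Finset ι} (hS : ∀ i ∈ S, z i = c) (y : E) :
    ∑ i, ‖c - z i‖ + ((#S : ℝ) - #Sᶜ) * ‖y - c‖ ≤ ∑ i, ‖y - z i‖ := by
  have inliers_at_c : ∑ i ∈ S, ‖c - z i‖ = 0 :=
    sum_eq_zero fun i hi ↦ by rw [hS i hi, sub_self, norm_zero]
  have inliers_from_y : ∑ i ∈ S, ‖y - z i‖ = #S * ‖y - c‖ := by
    rw [sum_congr rfl fun i hi ↦ by rw [hS i hi], sum_const, nsmul_eq_mul]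
  have outliers : ∑ i ∈ Sᶜ, ‖c - z i‖ ≤ #Sᶜ * ‖y - c‖ + ∑ i ∈ Sᶜ, ‖y - z i‖ :=
    calc ∑ i ∈ Sᶜ, ‖c - z i‖ ≤ ∑ i ∈ Sᶜ, (‖y - c‖ + ‖y - z i‖) :=
          sum_le_sum fun i _ ↦ norm_sub_rev c y ▸ norm_sub_le_norm_sub_add_norm_sub c y (z i)
      _ = #Sᶜ * ‖y - c‖ + ∑ i ∈ Sᶜ, ‖y - z i‖ := by
          rw [sum_add_distrib, sum_const, nsmul_eq_mul]
  rw [← sum_add_sum_compl S, ← sum_add_sum_compl S, inliers_at_c, inliers_from_y]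
  linarith

theorem sum_norm_sub_le_of_card_compl_le [SeminormedAddCommGroup E] {z : ι → E} {c : E}
    {S : Finset ι} (hS : ∀ i ∈ S, z i = c) (hmaj : #Sᶜ ≤ #S) (y : E) :
    ∑ i, ‖c - z i‖ ≤ ∑ i, ‖y - z i‖ := by
  have : (0 : ℝ) ≤ ((#S : ℝ) - #Sᶜ) * ‖y - c‖ :=
    mul_nonneg (sub_nonneg.2 (by exact_mod_cast hmaj)) (norm_nonneg _)
  linarith [sum_norm_sub_add_card_sub_card_compl_mul_le hS y]

theorem sum_norm_sub_lt_of_card_compl_lt [NormedAddCommGroup E] {z : ι → E} {c : E}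
    {S : Finset ι} (hS : ∀ i ∈ S, z i = c) (hmaj : #Sᶜ < #S) {y : E} (hy : y ≠ c) :
    ∑ i, ‖c - z i‖ < ∑ i, ‖y - z i‖ := by
  have : (0 : ℝ) < ((#S : ℝ) - #Sᶜ) * ‖y - c‖ :=
    mul_pos (sub_pos.2 (by exact_mod_cast hmaj)) (norm_pos_iff.2 (sub_ne_zero.2 hy))
  linarith [sum_norm_sub_add_card_sub_card_compl_mul_le hS y]

end GeometricMedian

theorem stmt_14_general (D N Nin Nout : ℕ)
    (Lstar : Submodule ℝ (EuclideanSpace ℝ (Fin D)))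
    (b : EuclideanSpace ℝ (Fin D))
    (Q : EuclideanSpace ℝ (Fin D) →L[ℝ] EuclideanSpace ℝ (Fin D))
    (hQ : Q = (Lstarᗮ).subtypeL.comp (Submodule.orthogonalProjectionOnto Lstarᗮ))
    (x : Fin N → EuclideanSpace ℝ (Fin D))
    (hNin : Nat.card {i : Fin N // x i - b ∈ Lstar} = Nin)
    (hN : Nin + Nout = N) (hmaj : Nout < Nin) :
    -- (i) `Qb` is the unique minimal-norm representative of the offset of `b + L*`
    (b - Q b ∈ Lstar) ∧
    (∀ b' : EuclideanSpace ℝ (Fin D), b - b' ∈ Lstar → b' ≠ Q b → ‖Q b‖ < ‖b'‖) ∧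
    -- (ii) projecting kills the inliers' spread and the geometric median recovers `Qb`
    (∀ i, x i - b ∈ Lstar → Q (x i) = Q b) ∧
    (∀ y : EuclideanSpace ℝ (Fin D), ∑ i, ‖Q b - Q (x i)‖ ≤ ∑ i, ‖y - Q (x i)‖) ∧
    (∀ y : EuclideanSpace ℝ (Fin D), y ≠ Q b →
      ∑ i, ‖Q b - Q (x i)‖ < ∑ i, ‖y - Q (x i)‖) := by
  classical
  obtain rfl : Q = Lstarᗮ.starProjection := hQ
  have inliers_collapse : ∀ i, x i - b ∈ Lstar →
      Lstarᗮ.starProjection (x i) = Lstarᗮ.starProjection b :=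
    fun i hi ↦ Lstar.starProjection_orthogonal_eq_iff.2 hi
  set S := univ.filter fun i ↦ x i - b ∈ Lstar
  have hS : #S = Nin := by rw [← hNin, Nat.card_eq_fintype_card, Fintype.card_subtype]
  have hSc : #Sᶜ = Nout := by rw [card_compl, hS, Fintype.card_fin]; omega
  have hS_collapse : ∀ i ∈ S, Lstarᗮ.starProjection (x i) = Lstarᗮ.starProjection b :=
    fun i hi ↦ inliers_collapse i (mem_filter.1 hi).2
  exact ⟨Lstar.sub_starProjection_orthogonal_mem b,
    fun _ hb' hne ↦ Lstar.norm_starProjection_orthogonal_lt hb' hne, inliers_collapse,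
    sum_norm_sub_le_of_card_compl_le hS_collapse (by omega),
    fun _ hy ↦ sum_norm_sub_lt_of_card_compl_lt hS_collapse (by omega) hy⟩

/-- Let `Q` be the orthogonal projection onto the orthogonal complement of
the `d`-subspace `L*`. (i) `Qb` is the unique minimal-norm offset among all `b'` with
`b − b' ∈ L*`. (ii) If `N_in` of the points lie in the affine subspace `b + L*` and
`N_out = N − N_in` do not, with `N_in > N_out`, then `Q x_i = Q b` for every point of
`b + L*`, and `Qb` is the unique geometric median of the projected dataset `(Q x_i)_i`. -/
theorem stmt_14 (D d N Nin Nout : ℕ)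
    (Lstar : Submodule ℝ (EuclideanSpace ℝ (Fin D)))
    (hLstar : finrank ℝ Lstar = d)
    (b : EuclideanSpace ℝ (Fin D))
    (Q : EuclideanSpace ℝ (Fin D) →L[ℝ] EuclideanSpace ℝ (Fin D))
    (hQ : Q = (Lstarᗮ).subtypeL.comp (Submodule.orthogonalProjectionOnto Lstarᗮ))
    (x : Fin N → EuclideanSpace ℝ (Fin D))
    (hNin : Nat.card {i : Fin N // x i - b ∈ Lstar} = Nin)
    (hN : Nin + Nout = N) (hmaj : Nout < Nin) :
    -- (i) `Qb` is the unique minimal-norm representative of the offset of `b + L*`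
    (b - Q b ∈ Lstar) ∧
    (∀ b' : EuclideanSpace ℝ (Fin D), b - b' ∈ Lstar → b' ≠ Q b → ‖Q b‖ < ‖b'‖) ∧
    -- (ii) projecting kills the inliers' spread and the geometric median recovers `Qb`
    (∀ i, x i - b ∈ Lstar → Q (x i) = Q b) ∧
    (∀ y : EuclideanSpace ℝ (Fin D), ∑ i, ‖Q b - Q (x i)‖ ≤ ∑ i, ‖y - Q (x i)‖) ∧
    (∀ y : EuclideanSpace ℝ (Fin D), y ≠ Q b →
      ∑ i, ‖Q b - Q (x i)‖ < ∑ i, ‖y - Q (x i)‖) :=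
  stmt_14_general D N Nin Nout Lstar b Q hQ x hNin hN hmaj
end
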